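/- arXiv:2303.14821 — 4 statements merged into one kernel-verified Lean document; each statement's English description precedes it below -/
import Mathlib

section
/- Let n ≥ 1 and consider the quiver 1 → 3 ← 2 with dimension vector (n₁, n₂, n₃) = (n, n, n). A weight σ = (σ₁, σ₂, σ₃) ∈ ℤ³ admits a nonzero semi-invariant polynomial if and only if σ₁ ≥ 0, σ₂ ≥ 0, and σ₁ + σ₂ + σ₃ = 0. -/
/-- Variables: entries of the matrix pair `(A, B)` with `A : n₃ × n₁` and `B : n₃ × n₂`. -/
abbrev TriVars (n₁ n₂ n₃ : ℕ) := (Fin n₃ × Fin n₁) ⊕ (Fin n₃ × Fin n₂)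

/-- Evaluate a polynomial in the matrix entries at `(A, B)`. -/
noncomputable def triEval {n₁ n₂ n₃ : ℕ} (f : MvPolynomial (TriVars n₁ n₂ n₃) ℂ)
    (A : Matrix (Fin n₃) (Fin n₁) ℂ) (B : Matrix (Fin n₃) (Fin n₂) ℂ) : ℂ :=
  MvPolynomial.eval (Sum.elim (fun p => A p.1 p.2) (fun p => B p.1 p.2)) f

/-- `f` is a semi-invariant of weight `(σ₁, σ₂, σ₃)` for the quiver `1 → 3 ← 2`. -/
def IsTriSemiInvariant {n₁ n₂ n₃ : ℕ} (σ₁ σ₂ σ₃ : ℤ)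
    (f : MvPolynomial (TriVars n₁ n₂ n₃) ℂ) : Prop :=
  ∀ (g₁ : (Matrix (Fin n₁) (Fin n₁) ℂ)ˣ) (g₂ : (Matrix (Fin n₂) (Fin n₂) ℂ)ˣ)
    (g₃ : (Matrix (Fin n₃) (Fin n₃) ℂ)ˣ)
    (A : Matrix (Fin n₃) (Fin n₁) ℂ) (B : Matrix (Fin n₃) (Fin n₂) ℂ),
    triEval f ((g₃ : Matrix (Fin n₃) (Fin n₃) ℂ) * A * (g₁⁻¹ : Matrix (Fin n₁) (Fin n₁) ℂ))
              ((g₃ : Matrix (Fin n₃) (Fin n₃) ℂ) * B * (g₂⁻¹ : Matrix (Fin n₂) (Fin n₂) ℂ))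
      = (g₁ : Matrix (Fin n₁) (Fin n₁) ℂ).det ^ (-σ₁)
        * (g₂ : Matrix (Fin n₂) (Fin n₂) ℂ).det ^ (-σ₂)
        * (g₃ : Matrix (Fin n₃) (Fin n₃) ℂ).det ^ (-σ₃)
        * triEval f A B

/-!
Scalar matrices `(a, b, c)` act on `(A, B)` as `((c / a) • A, (c / b) • B)`. Taking `a = s⁻¹`
(resp. `b = s⁻¹`) and `c = 1`, a nonzero semi-invariant `f` satisfies
`f (s • A, B) = s ^ (n σ₁) f (A, B)`, and since the left side is a polynomial in `s` while
`f (A, B) ≠ 0` for some `(A, B)`, the exponent `n σ₁` cannot be negative. Taking `a = b = c = 2`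
acts trivially, forcing `2 ^ (n (σ₁ + σ₂ + σ₃)) = 1`. Conversely `det A ^ σ₁ * det B ^ σ₂` is a
nonzero semi-invariant of weight `(σ₁, σ₂, -σ₁ - σ₂)`.
-/

open MvPolynomial

theorem Polynomial.exponent_nonneg_of_eval_eq_zpow_mul {K : Type*} [Field K] [Infinite K]
    {P : Polynomial K} {k : ℤ} {c : K} (hc : c ≠ 0)
    (hP : ∀ s : K, s ≠ 0 → P.eval s = s ^ k * c) : 0 ≤ k := by
  by_contra! hk
  obtain ⟨m, hm⟩ : ∃ m : ℕ, k = -((m + 1 : ℕ) : ℤ) := ⟨(-k - 1).toNat, by omega⟩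
  have hQ : X ^ (m + 1) * P = C c := by
    refine eq_of_infinite_eval_eq _ _ ((Set.finite_singleton 0).infinite_compl.mono ?_)
    intro s (hs : s ≠ 0)
    simp only [Set.mem_ofPred_eq, eval_mul, eval_pow, eval_X, eval_C, hP s hs, hm, zpow_neg,
      zpow_natCast]
    field_simp
  simpa [hc.symm] using congrArg (eval 0) hQ

variable {n₁ n₂ n₃ : ℕ}

section triEval

@[simp]
theorem triEval_mul (f g : MvPolynomial (TriVars n₁ n₂ n₃) ℂ) (A : Matrix (Fin n₃) (Fin n₁) ℂ)
    (B : Matrix (Fin n₃) (Fin n₂) ℂ) : triEval (f * g) A B = triEval f A B * triEval g A B :=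
  map_mul _ f g

@[simp]
theorem triEval_pow (f : MvPolynomial (TriVars n₁ n₂ n₃) ℂ) (k : ℕ)
    (A : Matrix (Fin n₃) (Fin n₁) ℂ) (B : Matrix (Fin n₃) (Fin n₂) ℂ) :
    triEval (f ^ k) A B = triEval f A B ^ k :=
  map_pow _ f k

theorem ne_zero_iff_exists_triEval_ne_zero {f : MvPolynomial (TriVars n₁ n₂ n₃) ℂ} :
    f ≠ 0 ↔ ∃ A B, triEval f A B ≠ 0 := by
  refine ⟨fun hf => ?_, fun ⟨A, B, h⟩ hf => h (by simp [hf, triEval])⟩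
  obtain ⟨x, hx⟩ : ∃ x, eval x f ≠ 0 := by
    by_contra! h
    exact hf (MvPolynomial.funext fun x => by simp [h x])
  refine ⟨Matrix.of fun i j => x (.inl (i, j)), Matrix.of fun i j => x (.inr (i, j)), ?_⟩
  convert hx using 1
  rw [triEval]
  congr 2
  funext x
  rcases x with _ | _ <;> rfl

theorem exists_polynomial_eval_eq_triEval_pow_smul (f : MvPolynomial (TriVars n₁ n₂ n₃) ℂ)
    (A : Matrix (Fin n₃) (Fin n₁) ℂ) (B : Matrix (Fin n₃) (Fin n₂) ℂ) (a b : ℕ) :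
    ∃ P : Polynomial ℂ, ∀ s, P.eval s = triEval f (s ^ a • A) (s ^ b • B) := by
  refine ⟨aeval (Sum.elim (fun p => Polynomial.C (A p.1 p.2) * Polynomial.X ^ a)
    (fun p => Polynomial.C (B p.1 p.2) * Polynomial.X ^ b)) f, fun s => ?_⟩
  rw [triEval, aeval_def, ← Polynomial.coe_evalRingHom, eval₂_comp_left, MvPolynomial.eval]
  congr 1
  · ext
    simp
  · funext x
    rcases x with _ | _ <;>
      simp only [Function.comp_apply, Sum.elim_inl, Sum.elim_inr, Polynomial.coe_evalRingHom,
        Polynomial.eval_mul, Polynomial.eval_C, Polynomial.eval_pow, Polynomial.eval_X,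
        Matrix.smul_apply, smul_eq_mul, mul_comm]

end triEval

namespace IsTriSemiInvariant

variable {σ₁ σ₂ σ₃ τ₁ τ₂ τ₃ : ℤ} {f g : MvPolynomial (TriVars n₁ n₂ n₃) ℂ}

theorem triEval_smul (hf : IsTriSemiInvariant σ₁ σ₂ σ₃ f) (a b c : ℂˣ)
    (A : Matrix (Fin n₃) (Fin n₁) ℂ) (B : Matrix (Fin n₃) (Fin n₂) ℂ) :
    triEval f (((c : ℂ) / a) • A) (((c : ℂ) / b) • B)
      = ((a : ℂ) ^ n₁) ^ (-σ₁) * ((b : ℂ) ^ n₂) ^ (-σ₂) * ((c : ℂ) ^ n₃) ^ (-σ₃)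
        * triEval f A B := by
  have h := hf (Units.map (Matrix.scalar (Fin n₁)).toMonoidHom a)
    (Units.map (Matrix.scalar (Fin n₂)).toMonoidHom b)
    (Units.map (Matrix.scalar (Fin n₃)).toMonoidHom c) A B
  rw [← Matrix.coe_units_inv, ← Matrix.coe_units_inv, ← map_inv, ← map_inv] at h
  simp only [Units.coe_map, MonoidHom.coe_coe, RingHom.toMonoidHom_eq_coe, Matrix.scalar_apply,
    ← Matrix.smul_one_eq_diagonal, Matrix.det_smul, Matrix.det_one, Fintype.card_fin,
    Matrix.smul_mul, Matrix.mul_smul, Matrix.one_mul, Matrix.mul_one, smul_smul, mul_one,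
    Units.val_inv_eq_inv_val] at h
  rwa [div_eq_inv_mul, div_eq_inv_mul]

theorem weight_nonneg (hf : IsTriSemiInvariant σ₁ σ₂ σ₃ f) (hf0 : f ≠ 0) (a b : ℕ) :
    0 ≤ a * (n₁ * σ₁) + b * (n₂ * σ₂) := by
  obtain ⟨A, B, hAB⟩ := ne_zero_iff_exists_triEval_ne_zero.mp hf0
  obtain ⟨P, hP⟩ := exists_polynomial_eval_eq_triEval_pow_smul f A B a b
  refine Polynomial.exponent_nonneg_of_eval_eq_zpow_mul (P := P) hAB fun s hs => ?_
  lift s to ℂˣ using hs.isUnit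
  have h := hf.triEval_smul (s ^ a)⁻¹ (s ^ b)⁻¹ 1 A B
  simp only [Units.val_one, one_div, Units.val_inv_eq_inv_val, Units.val_pow_eq_pow_val, inv_inv,
    one_pow, one_zpow, mul_one] at h
  rw [hP, h, zpow_add₀ s.ne_zero]
  simp only [← zpow_natCast, ← zpow_neg_one, ← zpow_mul]
  ring_nf

theorem weight_sum_eq_zero (hf : IsTriSemiInvariant σ₁ σ₂ σ₃ f) (hf0 : f ≠ 0) :
    n₁ * σ₁ + n₂ * σ₂ + n₃ * σ₃ = 0 := by
  obtain ⟨A, B, hAB⟩ := ne_zero_iff_exists_triEval_ne_zero.mp hf0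
  have h := hf.triEval_smul (Units.mk0 2 two_ne_zero) (Units.mk0 2 two_ne_zero)
    (Units.mk0 2 two_ne_zero) A B
  simp only [Units.val_mk0, div_self (two_ne_zero : (2 : ℂ) ≠ 0), one_smul] at h
  have h2 : (2 : ℂ) ^ (-(n₁ * σ₁ + n₂ * σ₂ + n₃ * σ₃)) = 1 := by
    simp only [← zpow_natCast, ← zpow_mul] at h
    rw [neg_add, neg_add, zpow_add₀ two_ne_zero, zpow_add₀ two_ne_zero]
    simpa [hAB] using h
  have h2' := congrArg norm h2
  rw [norm_zpow, norm_one, Complex.norm_two,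
    zpow_eq_one_iff_right₀ zero_le_two (by norm_num)] at h2'
  omega

theorem mul (hf : IsTriSemiInvariant σ₁ σ₂ σ₃ f) (hg : IsTriSemiInvariant τ₁ τ₂ τ₃ g) :
    IsTriSemiInvariant (σ₁ + τ₁) (σ₂ + τ₂) (σ₃ + τ₃) (f * g) := by
  intro g₁ g₂ g₃ A B
  have hdet {n : ℕ} (u : (Matrix (Fin n) (Fin n) ℂ)ˣ) : (u : Matrix (Fin n) (Fin n) ℂ).det ≠ 0 :=
    ((Matrix.isUnit_iff_isUnit_det _).mp u.isUnit).ne_zero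
  rw [triEval_mul, triEval_mul, hf, hg, neg_add, neg_add, neg_add, zpow_add₀ (hdet g₁),
    zpow_add₀ (hdet g₂), zpow_add₀ (hdet g₃)]
  ring

theorem pow (hf : IsTriSemiInvariant σ₁ σ₂ σ₃ f) (k : ℕ) :
    IsTriSemiInvariant (k * σ₁) (k * σ₂) (k * σ₃) (f ^ k) := by
  intro g₁ g₂ g₃ A B
  rw [triEval_pow, triEval_pow, hf, mul_pow, mul_pow, mul_pow]
  simp only [← zpow_natCast, ← zpow_mul, mul_neg, mul_comm]

end IsTriSemiInvariant

section det

variable {n : ℕ}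

noncomputable def detPolyA : MvPolynomial (TriVars n n₂ n) ℂ :=
  (Matrix.of fun i j => X (.inl (i, j))).det

noncomputable def detPolyB : MvPolynomial (TriVars n₁ n n) ℂ :=
  (Matrix.of fun i j => X (.inr (i, j))).det

@[simp]
theorem triEval_detPolyA (A : Matrix (Fin n) (Fin n) ℂ) (B : Matrix (Fin n) (Fin n₂) ℂ) :
    triEval detPolyA A B = A.det := by
  rw [triEval, detPolyA, RingHom.map_det]
  congr
  ext
  simp

@[simp]
theorem triEval_detPolyB (A : Matrix (Fin n) (Fin n₁) ℂ) (B : Matrix (Fin n) (Fin n) ℂ) :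
    triEval detPolyB A B = B.det := by
  rw [triEval, detPolyB, RingHom.map_det]
  congr
  ext
  simp

theorem isTriSemiInvariant_detPolyA :
    IsTriSemiInvariant 1 0 (-1) (detPolyA (n := n) (n₂ := n₂)) := by
  intro g₁ g₂ g₃ A B
  simp only [triEval_detPolyA, Matrix.det_mul, Matrix.det_nonsing_inv, Ring.inverse_eq_inv',
    zpow_neg_one, zpow_zero, zpow_one, neg_zero, neg_neg]
  ring

theorem isTriSemiInvariant_detPolyB :
    IsTriSemiInvariant 0 1 (-1) (detPolyB (n := n) (n₁ := n₁)) := by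
  intro g₁ g₂ g₃ A B
  simp only [triEval_detPolyB, Matrix.det_mul, Matrix.det_nonsing_inv, Ring.inverse_eq_inv',
    zpow_neg_one, zpow_zero, zpow_one, neg_zero, neg_neg]
  ring

end det

/-- for the quiver `1 → 3 ← 2` with dimension vector `(n, n, n)`, a weight
`(σ₁, σ₂, σ₃)` admits a nonzero semi-invariant iff `σ₁ ≥ 0`, `σ₂ ≥ 0`, `σ₁ + σ₂ + σ₃ = 0`. -/
theorem tri_semiinvariant_iff_nnn (n : ℕ) (hn : 1 ≤ n) (σ₁ σ₂ σ₃ : ℤ) :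
    (∃ f : MvPolynomial (TriVars n n n) ℂ, f ≠ 0 ∧ IsTriSemiInvariant σ₁ σ₂ σ₃ f)
      ↔ (0 ≤ σ₁ ∧ 0 ≤ σ₂ ∧ σ₁ + σ₂ + σ₃ = 0) := by
  have hn' : (0 : ℤ) < n := by exact_mod_cast hn
  constructor
  · rintro ⟨f, hf0, hf⟩
    have h₁ : 0 ≤ (n : ℤ) * σ₁ := by simpa using hf.weight_nonneg hf0 1 0
    have h₂ : 0 ≤ (n : ℤ) * σ₂ := by simpa using hf.weight_nonneg hf0 0 1
    have hsum : (n : ℤ) * (σ₁ + σ₂ + σ₃) = 0 := by linarith [hf.weight_sum_eq_zero hf0]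
    exact ⟨(mul_nonneg_iff_of_pos_left hn').mp h₁, (mul_nonneg_iff_of_pos_left hn').mp h₂,
      (mul_eq_zero.mp hsum).resolve_left hn'.ne'⟩
  · rintro ⟨hσ₁, hσ₂, hsum⟩
    lift σ₁ to ℕ using hσ₁
    lift σ₂ to ℕ using hσ₂
    refine ⟨detPolyA ^ σ₁ * detPolyB ^ σ₂,
      ne_zero_iff_exists_triEval_ne_zero.mpr ⟨1, 1, by simp⟩, ?_⟩
    convert (isTriSemiInvariant_detPolyA.pow σ₁).mul (isTriSemiInvariant_detPolyB.pow σ₂)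
      using 1 <;> omega
end

section
/- Let n₁, n₂ ≥ 1 and consider the quiver 1 → 3 ← 2 with dimension vector (n₁, n₂, n₃) where n₃ = n₁ + n₂. A weight σ = (σ₁, σ₂, σ₃) ∈ ℤ³ admits a nonzero semi-invariant polynomial if and only if σ₁ = σ₂ = −σ₃ and σ₁ ≥ 0. -/
/-!
Identify a pair `(A, B)` with the square matrix `[A | B]`; the group then acts by
`M ↦ g₃ * M * diag(g₁, g₂)⁻¹`, so `det [A | B] ^ k` is a semi-invariant of weight `(k, k, -k)`.

Conversely, the pairs with `[A | B]` invertible form the orbit of the base point `[A | B] = 1`,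
and they are Zariski dense, so a nonzero semi-invariant `f` does not vanish at the base point.
The stabiliser of the base point contains `(g₁, g₂, diag(g₁, g₂))`, which forces
`det g₁ ^ (σ₁ + σ₃) = det g₂ ^ (σ₂ + σ₃) = 1`, i.e. `σ₁ = σ₂ = -σ₃`. Finally, along the scalars
`g₃ = t`, the polynomial `t ↦ f (t • base)` equals `t ^ (-(n₁ + n₂) σ₃) * f base`,
which forces `-σ₃ ≥ 0`.
-/

theorem Polynomial.nonneg_of_eval_eq_zpow_mul {K : Type*} [Field K] [Infinite K]
    {p : Polynomial K} {c : K} (hc : c ≠ 0) {z : ℤ}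
    (h : ∀ t ≠ 0, p.eval t = t ^ z * c) : 0 ≤ z := by
  by_contra! hz
  obtain ⟨m, rfl⟩ := Int.exists_eq_neg_ofNat hz.le
  have hm : m ≠ 0 := by omega
  have hzero : X ^ m * p - C c = 0 := by
    refine Polynomial.eq_zero_of_infinite_isRoot _ <|
      (Set.finite_singleton 0).infinite_compl.mono fun t ht => ?_
    have ht : t ≠ 0 := ht
    simp [h t ht, zpow_neg, ht]
  exact hc (by simpa [hm] using congrArg (Polynomial.eval 0) hzero)

theorem eq_zero_of_forall_pow_zpow_eq_one {K : Type*} [Field K] [Infinite K] {n : ℕ}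
    (hn : n ≠ 0) {z : ℤ} (h : ∀ t : K, t ≠ 0 → (t ^ n) ^ z = 1) : z = 0 := by
  have hn' : (0 : ℤ) < n := by omega
  have h' (t : K) (ht : t ≠ 0) : t ^ ((n : ℤ) * z) = 1 := by
    rw [zpow_mul, zpow_natCast, h t ht]
  have hz : 0 ≤ (n : ℤ) * z := Polynomial.nonneg_of_eval_eq_zpow_mul (p := 1) one_ne_zero
    fun (t : K) ht => by simp [h' t ht]
  have hz' : 0 ≤ (n : ℤ) * -z := Polynomial.nonneg_of_eval_eq_zpow_mul (p := 1) one_ne_zero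
    fun (t : K) ht => by simp [mul_neg, zpow_neg, h' t ht]
  have := (mul_nonneg_iff_of_pos_left hn').mp hz
  have := (mul_nonneg_iff_of_pos_left hn').mp hz'
  omega

theorem MvPolynomial.eq_zero_of_eval_eq_zero_of_eval_ne_zero {R σ : Type*} [CommRing R]
    [IsDomain R] [Infinite R] {p q : MvPolynomial σ R} (hq : q ≠ 0)
    (h : ∀ x, eval x q ≠ 0 → eval x p = 0) : p = 0 := by
  have hqp : q * p = 0 := MvPolynomial.funext fun x => by
    by_cases hx : eval x q = 0 <;> simp [hx, h x]
  exact (mul_eq_zero.mp hqp).resolve_left hq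

theorem MvPolynomial.eval_aeval_C_mul_X {K σ : Type*} [Field K] (p : MvPolynomial σ K)
    (x : σ → K) (t : K) :
    (aeval (fun v => Polynomial.C (x v) * Polynomial.X) p).eval t = eval (t • x) p := by
  rw [← Polynomial.coe_aeval_eq_eval, comp_aeval_apply]
  have : (fun v => Polynomial.aeval t (Polynomial.C (x v) * Polynomial.X)) = t • x := by
    funext v
    simp only [map_mul, Polynomial.aeval_C, Polynomial.aeval_X, Algebra.algebraMap_self,
      RingHom.id_apply, Pi.smul_apply, smul_eq_mul, mul_comm]
  rw [this]
  rfl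

namespace Matrix

variable {R : Type*} {m : Type*} {n₁ n₂ : ℕ}

def appendCols (A : Matrix m (Fin n₁) R) (B : Matrix m (Fin n₂) R) : Matrix m (Fin (n₁ + n₂)) R :=
  Matrix.of fun i => Fin.append (A i) (B i)

@[simp]
theorem appendCols_castAdd (A : Matrix m (Fin n₁) R) (B : Matrix m (Fin n₂) R) (i : m)
    (j : Fin n₁) : appendCols A B i (Fin.castAdd n₂ j) = A i j := by
  simp [appendCols]

@[simp]
theorem appendCols_natAdd (A : Matrix m (Fin n₁) R) (B : Matrix m (Fin n₂) R) (i : m)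
    (j : Fin n₂) : appendCols A B i (Fin.natAdd n₁ j) = B i j := by
  simp [appendCols]

theorem mul_appendCols [Semiring R] [Fintype m] {l : Type*} (M : Matrix l m R)
    (A : Matrix m (Fin n₁) R) (B : Matrix m (Fin n₂) R) :
    M * appendCols A B = appendCols (M * A) (M * B) := by
  ext i j
  induction j using Fin.addCases <;> simp [mul_apply]

def blockDiagFin [Zero R] (h₁ : Matrix (Fin n₁) (Fin n₁) R) (h₂ : Matrix (Fin n₂) (Fin n₂) R) :
    Matrix (Fin (n₁ + n₂)) (Fin (n₁ + n₂)) R :=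
  reindex finSumFinEquiv finSumFinEquiv (fromBlocks h₁ 0 0 h₂)

theorem det_blockDiagFin [CommRing R] (h₁ : Matrix (Fin n₁) (Fin n₁) R)
    (h₂ : Matrix (Fin n₂) (Fin n₂) R) : (blockDiagFin h₁ h₂).det = h₁.det * h₂.det := by
  rw [blockDiagFin, det_reindex_self, det_fromBlocks_zero₂₁]

theorem appendCols_mul_blockDiagFin [Semiring R] (A : Matrix m (Fin n₁) R)
    (B : Matrix m (Fin n₂) R) (h₁ : Matrix (Fin n₁) (Fin n₁) R)
    (h₂ : Matrix (Fin n₂) (Fin n₂) R) :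
    appendCols A B * blockDiagFin h₁ h₂ = appendCols (A * h₁) (B * h₂) := by
  ext i j
  induction j using Fin.addCases <;> simp [mul_apply, blockDiagFin, Fin.sum_univ_add]

variable (R n₁ n₂) in
def oneLeft [Zero R] [One R] : Matrix (Fin (n₁ + n₂)) (Fin n₁) R :=
  (1 : Matrix (Fin (n₁ + n₂)) (Fin (n₁ + n₂)) R).submatrix id (Fin.castAdd n₂)

variable (R n₁ n₂) in
def oneRight [Zero R] [One R] : Matrix (Fin (n₁ + n₂)) (Fin n₂) R :=
  (1 : Matrix (Fin (n₁ + n₂)) (Fin (n₁ + n₂)) R).submatrix id (Fin.natAdd n₁)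

@[simp]
theorem appendCols_oneLeft_oneRight [Zero R] [One R] :
    appendCols (oneLeft R n₁ n₂) (oneRight R n₁ n₂) = 1 := by
  ext i j
  induction j using Fin.addCases <;> simp only [appendCols_castAdd, appendCols_natAdd] <;> rfl

theorem appendCols_mul_oneLeft [Semiring R] (A : Matrix m (Fin n₁) R) (B : Matrix m (Fin n₂) R) :
    appendCols A B * oneLeft R n₁ n₂ = A := by
  ext i j
  simp [oneLeft, mul_apply, one_apply]

theorem appendCols_mul_oneRight [Semiring R] (A : Matrix m (Fin n₁) R) (B : Matrix m (Fin n₂) R) :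
    appendCols A B * oneRight R n₁ n₂ = B := by
  ext i j
  simp [oneRight, mul_apply, one_apply]

theorem blockDiagFin_eq_appendCols [Semiring R] (h₁ : Matrix (Fin n₁) (Fin n₁) R)
    (h₂ : Matrix (Fin n₂) (Fin n₂) R) :
    blockDiagFin h₁ h₂ = appendCols (oneLeft R n₁ n₂ * h₁) (oneRight R n₁ n₂ * h₂) := by
  simpa using appendCols_mul_blockDiagFin (oneLeft R n₁ n₂) (oneRight R n₁ n₂) h₁ h₂

theorem blockDiagFin_mul_oneLeft [Semiring R] (h₁ : Matrix (Fin n₁) (Fin n₁) R)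
    (h₂ : Matrix (Fin n₂) (Fin n₂) R) :
    blockDiagFin h₁ h₂ * oneLeft R n₁ n₂ = oneLeft R n₁ n₂ * h₁ := by
  rw [blockDiagFin_eq_appendCols, appendCols_mul_oneLeft]

theorem blockDiagFin_mul_oneRight [Semiring R] (h₁ : Matrix (Fin n₁) (Fin n₁) R)
    (h₂ : Matrix (Fin n₂) (Fin n₂) R) :
    blockDiagFin h₁ h₂ * oneRight R n₁ n₂ = oneRight R n₁ n₂ * h₂ := by
  rw [blockDiagFin_eq_appendCols, appendCols_mul_oneRight]

end Matrix

open Matrix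

open MvPolynomial in
variable (n₁ n₂) in
noncomputable def triDetPoly : MvPolynomial (TriVars n₁ n₂ (n₁ + n₂)) ℂ :=
  (appendCols (Matrix.of fun i j => X (Sum.inl (i, j)))
    (Matrix.of fun i j => X (Sum.inr (i, j)))).det

theorem triEval_triDetPoly (A : Matrix (Fin (n₁ + n₂)) (Fin n₁) ℂ)
    (B : Matrix (Fin (n₁ + n₂)) (Fin n₂) ℂ) :
    triEval (triDetPoly n₁ n₂) A B = (appendCols A B).det := by
  rw [triEval, triDetPoly, RingHom.map_det]
  congr 1
  ext i j
  induction j using Fin.addCases <;> simp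

theorem triDetPoly_ne_zero : triDetPoly n₁ n₂ ≠ 0 := by
  intro h
  have := triEval_triDetPoly (oneLeft ℂ n₁ n₂) (oneRight ℂ n₁ n₂)
  simp [h, triEval] at this

theorem eval_eq_triEval (f : MvPolynomial (TriVars n₁ n₂ (n₁ + n₂)) ℂ)
    (x : TriVars n₁ n₂ (n₁ + n₂) → ℂ) :
    MvPolynomial.eval x f = triEval f (Matrix.of fun i j => x (.inl (i, j)))
      (Matrix.of fun i j => x (.inr (i, j))) := by
  rw [triEval]
  congr
  funext v
  cases v <;> rfl

theorem isTriSemiInvariant_triDetPoly_pow (k : ℕ) :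
    IsTriSemiInvariant k k (-k) (triDetPoly n₁ n₂ ^ k) := by
  intro g₁ g₂ g₃ A B
  have happend : appendCols (g₃.val * A * g₁.val⁻¹) (g₃.val * B * g₂.val⁻¹)
      = g₃.val * appendCols A B * blockDiagFin g₁.val⁻¹ g₂.val⁻¹ := by
    simp only [Matrix.mul_assoc, appendCols_mul_blockDiagFin, mul_appendCols]
  have hpow (A B) : triEval (triDetPoly n₁ n₂ ^ k) A B = (appendCols A B).det ^ k := by
    rw [triEval, map_pow, ← triEval, triEval_triDetPoly]
  rw [hpow, hpow, happend, det_mul, det_mul, det_blockDiagFin, det_nonsing_inv, det_nonsing_inv,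
    Ring.inverse_eq_inv']
  simp only [_root_.zpow_neg, zpow_natCast, neg_neg, mul_pow, inv_pow]
  ring

theorem triEval_smul_smul_eq_eval (f : MvPolynomial (TriVars n₁ n₂ (n₁ + n₂)) ℂ)
    (A : Matrix (Fin (n₁ + n₂)) (Fin n₁) ℂ) (B : Matrix (Fin (n₁ + n₂)) (Fin n₂) ℂ) (t : ℂ) :
    triEval f (t • A) (t • B) = (MvPolynomial.aeval (fun v => Polynomial.C
      ((Sum.elim (fun p => A p.1 p.2) (fun p => B p.1 p.2) : TriVars n₁ n₂ (n₁ + n₂) → ℂ) v)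
        * Polynomial.X) f).eval t := by
  rw [MvPolynomial.eval_aeval_C_mul_X, triEval]
  congr
  funext v
  cases v <;> rfl

section SemiInvariant

variable {σ₁ σ₂ σ₃ : ℤ} {f : MvPolynomial (TriVars n₁ n₂ (n₁ + n₂)) ℂ}

theorem IsTriSemiInvariant.triEval_eq_det_zpow_mul (hf : IsTriSemiInvariant σ₁ σ₂ σ₃ f)
    (A : Matrix (Fin (n₁ + n₂)) (Fin n₁) ℂ) (B : Matrix (Fin (n₁ + n₂)) (Fin n₂) ℂ)
    (hAB : IsUnit (appendCols A B)) :
    triEval f A B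
      = (appendCols A B).det ^ (-σ₃) * triEval f (oneLeft ℂ n₁ n₂) (oneRight ℂ n₁ n₂) := by
  simpa [appendCols_mul_oneLeft, appendCols_mul_oneRight] using
    hf 1 1 hAB.unit (oneLeft ℂ n₁ n₂) (oneRight ℂ n₁ n₂)

theorem IsTriSemiInvariant.triEval_oneLeft_oneRight_ne_zero
    (hf : IsTriSemiInvariant σ₁ σ₂ σ₃ f) (hf₀ : f ≠ 0) :
    triEval f (oneLeft ℂ n₁ n₂) (oneRight ℂ n₁ n₂) ≠ 0 := by
  intro hc
  refine hf₀ (MvPolynomial.eq_zero_of_eval_eq_zero_of_eval_ne_zero triDetPoly_ne_zero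
    fun x hx => ?_)
  rw [eval_eq_triEval, triEval_triDetPoly] at hx
  have hunit := (isUnit_iff_isUnit_det _).mpr (isUnit_iff_ne_zero.mpr hx)
  rw [eval_eq_triEval, hf.triEval_eq_det_zpow_mul _ _ hunit, hc, mul_zero]

theorem IsTriSemiInvariant.det_zpow_mul_eq_one (hf : IsTriSemiInvariant σ₁ σ₂ σ₃ f)
    (hc : triEval f (oneLeft ℂ n₁ n₂) (oneRight ℂ n₁ n₂) ≠ 0)
    (g₁ : (Matrix (Fin n₁) (Fin n₁) ℂ)ˣ) (g₂ : (Matrix (Fin n₂) (Fin n₂) ℂ)ˣ) :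
    g₁.val.det ^ (-σ₁) * g₂.val.det ^ (-σ₂) * (g₁.val.det * g₂.val.det) ^ (-σ₃) = 1 := by
  have hdet₁ := (isUnit_iff_isUnit_det _).mp g₁.isUnit
  have hdet₂ := (isUnit_iff_isUnit_det _).mp g₂.isUnit
  have hunit : IsUnit (blockDiagFin g₁.val g₂.val) := by
    rw [isUnit_iff_isUnit_det, det_blockDiagFin]
    exact hdet₁.mul hdet₂
  have h := hf g₁ g₂ hunit.unit (oneLeft ℂ n₁ n₂) (oneRight ℂ n₁ n₂)
  rw [IsUnit.unit_spec, blockDiagFin_mul_oneLeft, blockDiagFin_mul_oneRight, Matrix.mul_assoc,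
    Matrix.mul_assoc, mul_nonsing_inv _ hdet₁, mul_nonsing_inv _ hdet₂, Matrix.mul_one,
    Matrix.mul_one, det_blockDiagFin] at h
  exact (mul_eq_right₀ hc).mp h.symm

theorem IsTriSemiInvariant.fst_eq_neg_thd (hf : IsTriSemiInvariant σ₁ σ₂ σ₃ f) (hn₁ : n₁ ≠ 0)
    (hc : triEval f (oneLeft ℂ n₁ n₂) (oneRight ℂ n₁ n₂) ≠ 0) : σ₁ = -σ₃ := by
  have hpow (t : ℂ) (ht : t ≠ 0) : (t ^ n₁) ^ (-σ₁ + -σ₃) = 1 := by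
    have := hf.det_zpow_mul_eq_one hc
      (Units.map (scalar (Fin n₁) : ℂ →+* _).toMonoidHom (Units.mk0 t ht)) 1
    simpa [zpow_add₀ (pow_ne_zero n₁ ht), _root_.zpow_neg] using this
  have := eq_zero_of_forall_pow_zpow_eq_one hn₁ hpow
  omega

theorem IsTriSemiInvariant.snd_eq_neg_thd (hf : IsTriSemiInvariant σ₁ σ₂ σ₃ f) (hn₂ : n₂ ≠ 0)
    (hc : triEval f (oneLeft ℂ n₁ n₂) (oneRight ℂ n₁ n₂) ≠ 0) : σ₂ = -σ₃ := by
  have hpow (t : ℂ) (ht : t ≠ 0) : (t ^ n₂) ^ (-σ₂ + -σ₃) = 1 := by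
    have := hf.det_zpow_mul_eq_one hc 1
      (Units.map (scalar (Fin n₂) : ℂ →+* _).toMonoidHom (Units.mk0 t ht))
    simpa [zpow_add₀ (pow_ne_zero n₂ ht), _root_.zpow_neg] using this
  have := eq_zero_of_forall_pow_zpow_eq_one hn₂ hpow
  omega

theorem IsTriSemiInvariant.triEval_smul_oneLeft_oneRight (hf : IsTriSemiInvariant σ₁ σ₂ σ₃ f)
    {t : ℂ} (ht : t ≠ 0) :
    triEval f (t • oneLeft ℂ n₁ n₂) (t • oneRight ℂ n₁ n₂)
      = t ^ (((n₁ + n₂ : ℕ) : ℤ) * -σ₃) * triEval f (oneLeft ℂ n₁ n₂) (oneRight ℂ n₁ n₂) := by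
  have := hf 1 1 (Units.map (scalar (Fin (n₁ + n₂)) : ℂ →+* _).toMonoidHom (Units.mk0 t ht))
    (oneLeft ℂ n₁ n₂) (oneRight ℂ n₁ n₂)
  rw [_root_.zpow_mul, zpow_natCast]
  simpa [smul_eq_diagonal_mul] using this

theorem IsTriSemiInvariant.neg_thd_nonneg (hf : IsTriSemiInvariant σ₁ σ₂ σ₃ f)
    (hn : n₁ + n₂ ≠ 0) (hc : triEval f (oneLeft ℂ n₁ n₂) (oneRight ℂ n₁ n₂) ≠ 0) : 0 ≤ -σ₃ := by
  have := Polynomial.nonneg_of_eval_eq_zpow_mul hc fun t ht =>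
    (triEval_smul_smul_eq_eval f _ _ t).symm.trans (hf.triEval_smul_oneLeft_oneRight ht)
  exact (mul_nonneg_iff_of_pos_left (by omega)).mp this

end SemiInvariant

/-- for the quiver `1 → 3 ← 2` with dimension vector `(n₁, n₂, n₁ + n₂)`,
a weight `(σ₁, σ₂, σ₃)` admits a nonzero semi-invariant iff `σ₁ = σ₂ = -σ₃` and `σ₁ ≥ 0`. -/
theorem tri_semiinvariant_iff_sum (n₁ n₂ : ℕ) (hn₁ : 1 ≤ n₁) (hn₂ : 1 ≤ n₂)
    (σ₁ σ₂ σ₃ : ℤ) :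
    (∃ f : MvPolynomial (TriVars n₁ n₂ (n₁ + n₂)) ℂ, f ≠ 0 ∧ IsTriSemiInvariant σ₁ σ₂ σ₃ f)
      ↔ (σ₁ = σ₂ ∧ σ₂ = -σ₃ ∧ 0 ≤ σ₁) := by
  constructor
  · rintro ⟨f, hf₀, hf⟩
    have hc := hf.triEval_oneLeft_oneRight_ne_zero hf₀
    have h₁ := hf.fst_eq_neg_thd (by omega) hc
    have h₂ := hf.snd_eq_neg_thd (by omega) hc
    have h₃ := hf.neg_thd_nonneg (by omega) hc
    omega
  · rintro ⟨rfl, h₂₃, hσ⟩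
    obtain ⟨k, rfl⟩ := Int.eq_ofNat_of_zero_le hσ
    obtain rfl : σ₃ = -k := by omega
    exact ⟨triDetPoly n₁ n₂ ^ k, pow_ne_zero k triDetPoly_ne_zero,
      isTriSemiInvariant_triDetPoly_pow k⟩
end

section
/- Let n₁, n₂, n₃ ≥ 1 with n₁ ≠ n₃, n₂ ≠ n₃, and n₁ + n₂ ≠ n₃, and consider the quiver 1 → 3 ← 2 with dimension vector (n₁, n₂, n₃). Then the only weight σ ∈ ℤ³ admitting a nonzero semi-invariant polynomial is σ = (0, 0, 0). -/
/-!
The semi-invariance identities of a nonzero semi-invariant `f` extend from invertible to all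
matrices, because `f` is continuous and invertible matrices are dense; evaluating at the zero
matrix then shows `σ₁, σ₂ ≥ 0 ≥ σ₃`. Scalar matrices give `n₁σ₁ + n₂σ₂ = -n₃σ₃`. When
`n₃ < n₁`, a singular `X` with `A X = A` forces `σ₁ = 0`, and a singular `Z` fixing the columns of
`A` and `B` forces `σ₃ = 0` as soon as these span a proper subspace; this settles every case but
`n₁, n₂ < n₃ < n₁ + n₂`. There a generic pair `(A, B)` is carried by matrices with nonzero
determinants onto the normal form in which `A` and `B` are coordinate inclusions overlapping in
`k = n₁ + n₂ - n₃` coordinates. Since a nonzero polynomial does not vanish on a nonempty open set,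
`f` is nonzero at the normal form, and the diagonal matrices stabilising it give
`σ₁ = σ₂ = -σ₃`, whence `k σ₃ = 0`.
-/


open MvPolynomial Matrix

section Density

variable {𝕜 : Type*} [NontriviallyNormedField 𝕜]

theorem MvPolynomial.dense_setOf_eval_ne_zero {σ : Type*} [Fintype σ] {p : MvPolynomial σ 𝕜}
    (hp : p ≠ 0) : Dense {x : σ → 𝕜 | eval x p ≠ 0} := by
  refine dense_iff_inter_open.mpr fun U hU ⟨x, hx⟩ => ?_
  obtain ⟨ε, hε, hball⟩ := Metric.isOpen_iff.mp hU x hx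
  by_contra hempty
  refine hp (funext_set (fun i => Metric.ball (x i) ε)
    (fun i => infinite_of_mem_nhds _ (Metric.ball_mem_nhds _ hε)) fun y hy => ?_)
  rw [← ball_pi x hε] at hy
  by_contra hne
  exact hempty ⟨y, hball hy, by simpa using hne⟩

theorem dense_setOf_ne_zero_of_eval_eq {σ X : Type*} [Fintype σ] [TopologicalSpace X]
    {Ψ : (σ → 𝕜) → X} (hΨ : Continuous Ψ) (hΨs : Function.Surjective Ψ) {φ : X → 𝕜}
    {p : MvPolynomial σ 𝕜} (hp : p ≠ 0) (hφ : ∀ v, φ (Ψ v) = eval v p) :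
    Dense {x | φ x ≠ 0} := by
  refine (hΨs.denseRange.dense_image hΨ (MvPolynomial.dense_setOf_eval_ne_zero hp)).mono ?_
  rintro _ ⟨v, hv, rfl⟩
  simpa [hφ] using hv

theorem Matrix.dense_setOf_det_ne_zero {n : Type*} [Fintype n] [DecidableEq n] :
    Dense {X : Matrix n n 𝕜 | X.det ≠ 0} :=
  dense_setOf_ne_zero_of_eval_eq (Ψ := fun v => Matrix.of fun i j => v (i, j))
    (by fun_prop) (fun X => ⟨fun ij => X ij.1 ij.2, rfl⟩) (det_mvPolynomialX_ne_zero n 𝕜)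
    fun v => (eval_det_mvPolynomialX n 𝕜 v).symm

variable {n : Type*} [Fintype n] [DecidableEq n] {F : Matrix n n 𝕜 → 𝕜} {σ : ℤ} {c : 𝕜}

theorem Matrix.nonneg_of_continuous_eq_det_zpow_mul [Nonempty n] (hF : Continuous F)
    (h : ∀ X : Matrix n n 𝕜, X.det ≠ 0 → F X = X.det ^ σ * c) (hc : c ≠ 0) : 0 ≤ σ := by
  by_contra! hσ
  have hext : ∀ X : Matrix n n 𝕜, F X * X.det ^ (-σ).toNat = c := by
    refine congrFun (Continuous.ext_on dense_setOf_det_ne_zero (by fun_prop) continuous_const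
      fun X (hX : X.det ≠ 0) => ?_)
    rw [h X hX, ← zpow_natCast, Int.toNat_of_nonneg (by omega), mul_right_comm, ← zpow_add₀ hX,
      add_neg_cancel, zpow_zero, one_mul]
  exact hc (by simpa [det_zero, zero_pow (by omega : (-σ).toNat ≠ 0)] using (hext 0).symm)

theorem Matrix.eq_det_pow_toNat_mul_of_continuous (hF : Continuous F)
    (h : ∀ X : Matrix n n 𝕜, X.det ≠ 0 → F X = X.det ^ σ * c) (hσ : 0 ≤ σ) (X : Matrix n n 𝕜) :
    F X = X.det ^ σ.toNat * c := by
  refine congrFun (Continuous.ext_on dense_setOf_det_ne_zero hF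
    (g := fun X : Matrix n n 𝕜 => X.det ^ σ.toNat * c) (by fun_prop)
    fun X (hX : X.det ≠ 0) => ?_) X
  simp only [h X hX, ← zpow_natCast, Int.toNat_of_nonneg hσ]

end Density

section Singular

variable {K : Type*} [Field K] {m n : Type*} [Fintype m] [Fintype n]

theorem Matrix.exists_det_eq_zero_mul_eq_self [DecidableEq n] (A : Matrix m n K)
    (h : Fintype.card m < Fintype.card n) : ∃ X : Matrix n n K, X.det = 0 ∧ A * X = A := by
  obtain ⟨v, hv, hv0⟩ := Submodule.exists_mem_ne_zero_of_ne_bot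
    (LinearMap.ker_ne_bot_of_finrank_lt (f := A.mulVecLin) (by simpa using h))
  obtain ⟨i, hi⟩ := Function.ne_iff.mp hv0
  have hAv : A *ᵥ v = 0 := hv
  have hwv : Pi.single i (v i)⁻¹ ⬝ᵥ v = 1 := by simp [single_dotProduct, inv_mul_cancel₀ hi]
  refine ⟨1 - vecMulVec v (Pi.single i (v i)⁻¹), exists_mulVec_eq_zero_iff.mp ⟨v, hv0, ?_⟩, ?_⟩
  · simp [sub_mulVec, vecMulVec_mulVec, hwv]
  · simp [Matrix.mul_sub, mul_vecMulVec, hAv]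

theorem Matrix.exists_det_eq_zero_mul_left_eq_self [DecidableEq m] (A : Matrix m n K)
    (h : Fintype.card n < Fintype.card m) : ∃ Z : Matrix m m K, Z.det = 0 ∧ Z * A = A := by
  obtain ⟨X, hX, hAX⟩ := Aᵀ.exists_det_eq_zero_mul_eq_self h
  exact ⟨Xᵀ, by rwa [det_transpose], by rw [← transpose_transpose A, ← transpose_mul, hAX]⟩

end Singular

theorem eq_of_two_pow_mul_eq {K : Type*} [Field K] [CharZero K] {a b : ℕ} {c : K} (hc : c ≠ 0)
    (h : (2 : K) ^ a * c = 2 ^ b * c) : a = b :=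
  Nat.pow_right_injective le_rfl (by exact_mod_cast mul_right_cancel₀ hc h)

structure IsDetSemiInvariant {K m n₁ n₂ : Type*} [CommRing K] [Fintype m] [Fintype n₁] [Fintype n₂]
    [DecidableEq m] [DecidableEq n₁] [DecidableEq n₂] (φ : Matrix m n₁ K → Matrix m n₂ K → K)
    (p q r : ℕ) : Prop where
  mul_first : ∀ (X : Matrix n₁ n₁ K) A B, φ (A * X) B = X.det ^ p * φ A B
  mul_second : ∀ (Y : Matrix n₂ n₂ K) A B, φ A (B * Y) = Y.det ^ q * φ A B
  mul_target : ∀ (Z : Matrix m m K) A B, φ (Z * A) (Z * B) = Z.det ^ r * φ A B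

namespace IsDetSemiInvariant

variable {K m n₁ n₂ : Type*} [Field K] [Fintype m] [Fintype n₁] [Fintype n₂]
  [DecidableEq m] [DecidableEq n₁] [DecidableEq n₂] {φ : Matrix m n₁ K → Matrix m n₂ K → K}
  {p q r : ℕ} {A : Matrix m n₁ K} {B : Matrix m n₂ K}

theorem swap (hφ : IsDetSemiInvariant φ p q r) : IsDetSemiInvariant (fun B A => φ A B) q p r :=
  ⟨fun Y B A => hφ.mul_second Y A B, fun X B A => hφ.mul_first X A B,
    fun Z B A => hφ.mul_target Z A B⟩

theorem reindex {m' n₁' n₂' : Type*} [Fintype m'] [Fintype n₁'] [Fintype n₂'] [DecidableEq m']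
    [DecidableEq n₁'] [DecidableEq n₂'] (hφ : IsDetSemiInvariant φ p q r) (e : m ≃ m')
    (e₁ : n₁ ≃ n₁') (e₂ : n₂ ≃ n₂') :
    IsDetSemiInvariant
      (fun A B => φ (Matrix.reindex e.symm e₁.symm A) (Matrix.reindex e.symm e₂.symm B)) p q r where
  mul_first X A B := by
    simpa only [reindex_apply, Equiv.symm_symm, submatrix_mul_equiv, det_submatrix_equiv_self]
      using hφ.mul_first (X.submatrix e₁ e₁) (A.submatrix e e₁) (B.submatrix e e₂)
  mul_second Y A B := by
    simpa only [reindex_apply, Equiv.symm_symm, submatrix_mul_equiv, det_submatrix_equiv_self]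
      using hφ.mul_second (Y.submatrix e₂ e₂) (A.submatrix e e₁) (B.submatrix e e₂)
  mul_target Z A B := by
    simpa only [reindex_apply, Equiv.symm_symm, submatrix_mul_equiv, det_submatrix_equiv_self]
      using hφ.mul_target (Z.submatrix e e) (A.submatrix e e₁) (B.submatrix e e₂)

theorem first_eq_zero_of_card_lt (hφ : IsDetSemiInvariant φ p q r)
    (h : Fintype.card m < Fintype.card n₁) (hAB : φ A B ≠ 0) : p = 0 := by
  obtain ⟨X, hX, hAX⟩ := A.exists_det_eq_zero_mul_eq_self h
  by_contra hp
  simpa [hAX, hX, zero_pow hp, hAB] using hφ.mul_first X A B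

theorem target_eq_zero_of_card_add_lt (hφ : IsDetSemiInvariant φ p q r)
    (h : Fintype.card n₁ + Fintype.card n₂ < Fintype.card m) (hAB : φ A B ≠ 0) : r = 0 := by
  obtain ⟨Z, hZ, hZAB⟩ := (fromCols A B).exists_det_eq_zero_mul_left_eq_self
    (by simpa using h)
  rw [mul_fromCols] at hZAB
  obtain ⟨hZA, hZB⟩ := fromCols_inj hZAB
  by_contra hr
  simpa [hZA, hZB, hZ, zero_pow hr, hAB] using hφ.mul_target Z A B

theorem target_eq_zero_of_card_lt (hφ : IsDetSemiInvariant φ 0 q r)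
    (h : Fintype.card n₂ < Fintype.card m) (hAB : φ A B ≠ 0) : r = 0 := by
  obtain ⟨Z, hZ, hZB⟩ := B.exists_det_eq_zero_mul_left_eq_self h
  have hA : φ 0 B = φ A B := by simpa using hφ.mul_first 0 A B
  by_contra hr
  simpa [hZB, hZ, zero_pow hr, hA, hAB] using hφ.mul_target Z 0 B

theorem card_mul_add_card_mul_eq [CharZero K] (hφ : IsDetSemiInvariant φ p q r)
    (hAB : φ A B ≠ 0) :
    Fintype.card n₁ * p + Fintype.card n₂ * q = Fintype.card m * r := by
  refine eq_of_two_pow_mul_eq hAB ?_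
  have h₁ := hφ.mul_first ((2 : K) • 1) A ((2 : K) • B)
  have h₂ := hφ.mul_second ((2 : K) • 1) A B
  have h₃ := hφ.mul_target ((2 : K) • 1) A B
  simp only [Matrix.mul_smul, Matrix.smul_mul, Matrix.mul_one, Matrix.one_mul, det_smul, det_one,
    mul_one] at h₁ h₂ h₃
  rw [pow_add, pow_mul, pow_mul, pow_mul, mul_assoc, ← h₂, ← h₁, h₃]

end IsDetSemiInvariant

theorem Matrix.mul_one_submatrix {K μ ι ι' : Type*} [NonAssocSemiring K] [Fintype ι]
    [DecidableEq ι] (Z : Matrix μ ι K) (e : ι' → ι) :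
    Z * (1 : Matrix ι ι K).submatrix id e = Z.submatrix id e :=
  mul_submatrix_one (Equiv.refl ι) e Z

theorem Matrix.diagonal_mul_one_submatrix {K ι ι' : Type*} [NonAssocSemiring K] [Fintype ι]
    [DecidableEq ι] [Fintype ι'] [DecidableEq ι'] (d : ι → K) (e : ι' → ι) :
    diagonal d * (1 : Matrix ι ι K).submatrix id e
      = (1 : Matrix ι ι K).submatrix id e * diagonal (d ∘ e) := by
  ext i j
  by_cases h : i = e j <;> simp [mul_diagonal, one_apply, h]

namespace GenericPair

variable {K α κ β : Type*} [CommRing K] [DecidableEq α] [DecidableEq κ] [DecidableEq β]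

def normalFst : Matrix ((α ⊕ κ) ⊕ β) (α ⊕ κ) K :=
  (1 : Matrix ((α ⊕ κ) ⊕ β) ((α ⊕ κ) ⊕ β) K).submatrix id Sum.inl

def normalSnd : Matrix ((α ⊕ κ) ⊕ β) (κ ⊕ β) K :=
  (1 : Matrix ((α ⊕ κ) ⊕ β) ((α ⊕ κ) ⊕ β) K).submatrix id (Sum.elim (Sum.inl ∘ Sum.inr) Sum.inr)

def pivot (A : Matrix ((α ⊕ κ) ⊕ β) (α ⊕ κ) K) (B : Matrix ((α ⊕ κ) ⊕ β) (κ ⊕ β) K) :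
    Matrix ((α ⊕ κ) ⊕ β) ((α ⊕ κ) ⊕ β) K :=
  fromCols A B.toCols₂

theorem pivot_normal : pivot (normalFst : Matrix ((α ⊕ κ) ⊕ β) (α ⊕ κ) K) normalSnd = 1 := by
  ext i (j | j) <;> rfl

variable [Fintype α] [Fintype κ] [Fintype β]

def cramer (A : Matrix ((α ⊕ κ) ⊕ β) (α ⊕ κ) K) (B : Matrix ((α ⊕ κ) ⊕ β) (κ ⊕ β) K) :
    Matrix ((α ⊕ κ) ⊕ β) κ K :=
  (pivot A B).adjugate * B.toCols₁

theorem cramer_normal :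
    (cramer (normalFst : Matrix ((α ⊕ κ) ⊕ β) (α ⊕ κ) K) normalSnd).toRows₁.toRows₂ = 1 := by
  rw [cramer, pivot_normal, adjugate_one, Matrix.one_mul]
  ext i j
  simp [normalSnd, one_apply]

/- With `C = cramer A B` and `B = [B_κ | B_β]`, Cramer's rule reads
`A * C.toRows₁ + B_β * C.toRows₂ = det (pivot A B) • B_κ`. Replacing the `κ`-columns of `A` by
`A * C.toRows₁` (through `M`) and those of `B` by `det (pivot A B) • B_κ - B_β * C.toRows₂`
(through `N`) makes `A * M` and `B * N` share these columns, as the normal form does. -/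
theorem exists_mul_normal_eq (A : Matrix ((α ⊕ κ) ⊕ β) (α ⊕ κ) K)
    (B : Matrix ((α ⊕ κ) ⊕ β) (κ ⊕ β) K) :
    ∃ (Z : Matrix ((α ⊕ κ) ⊕ β) ((α ⊕ κ) ⊕ β) K) (M : Matrix (α ⊕ κ) (α ⊕ κ) K)
      (N : Matrix (κ ⊕ β) (κ ⊕ β) K), Z * (normalFst : Matrix ((α ⊕ κ) ⊕ β) (α ⊕ κ) K) = A * M ∧
      Z * (normalSnd : Matrix ((α ⊕ κ) ⊕ β) (κ ⊕ β) K) = B * N ∧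
      M.det = (cramer A B).toRows₁.toRows₂.det ∧ N.det = (pivot A B).det ^ Fintype.card κ := by
  have h : pivot A B * cramer A B = (pivot A B).det • B.toCols₁ := by
    rw [cramer, ← Matrix.mul_assoc, mul_adjugate, Matrix.smul_mul, Matrix.one_mul]
  set C := cramer A B
  set d := (pivot A B).det
  have hcramer : A * C.toRows₁ = d • B.toCols₁ - B.toCols₂ * C.toRows₂ := by
    rw [pivot, ← fromRows_toRows C, fromCols_mul_fromRows] at h
    simpa using eq_sub_of_add_eq h
  have hM : fromCols (fromRows (1 : Matrix α α K) 0) C.toRows₁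
      = fromBlocks 1 C.toRows₁.toRows₁ 0 C.toRows₁.toRows₂ := by
    rw [← fromCols_fromRows_eq_fromBlocks, fromRows_toRows]
  refine ⟨fromCols (A * fromCols (fromRows 1 0) C.toRows₁) B.toCols₂,
    fromCols (fromRows 1 0) C.toRows₁, fromBlocks (d • 1) 0 (-C.toRows₂) 1, ?_, ?_,
    by rw [hM, det_fromBlocks_zero₂₁, det_one, one_mul],
    by rw [det_fromBlocks_zero₁₂, det_smul, det_one, det_one, mul_one, mul_one]⟩
  · rw [normalFst, mul_one_submatrix]
    rfl
  · have hBN : B * (fromBlocks (d • 1) 0 (-C.toRows₂) 1 : Matrix (κ ⊕ β) (κ ⊕ β) K)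
        = fromCols (A * C.toRows₁) B.toCols₂ := by
      conv_lhs => rw [← fromCols_toCols B, ← fromCols_fromRows_eq_fromBlocks]
      rw [mul_fromCols, fromCols_mul_fromRows, fromCols_mul_fromRows, hcramer]
      simp [sub_eq_add_neg]
    rw [normalSnd, mul_one_submatrix, hBN]
    ext i (j | j) <;> simp

def IsGeneric (A : Matrix ((α ⊕ κ) ⊕ β) (α ⊕ κ) K) (B : Matrix ((α ⊕ κ) ⊕ β) (κ ⊕ β) K) :
    Prop :=
  (pivot A B).det ≠ 0 ∧ (cramer A B).toRows₁.toRows₂.det ≠ 0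

theorem isGeneric_normal [Nontrivial K] :
    IsGeneric (normalFst : Matrix ((α ⊕ κ) ⊕ β) (α ⊕ κ) K) normalSnd := by
  simp [IsGeneric, pivot_normal, cramer_normal]

theorem isOpen_setOf_isGeneric [TopologicalSpace K] [IsTopologicalRing K] [T2Space K] :
    IsOpen {x : Matrix ((α ⊕ κ) ⊕ β) (α ⊕ κ) K × Matrix ((α ⊕ κ) ⊕ β) (κ ⊕ β) K |
      IsGeneric x.1 x.2} := by
  have hpivot : Continuous fun x : Matrix ((α ⊕ κ) ⊕ β) (α ⊕ κ) K ×
      Matrix ((α ⊕ κ) ⊕ β) (κ ⊕ β) K => pivot x.1 x.2 :=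
    continuous_matrix fun i j => by
      rcases j with j | j <;>
        simp only [pivot, fromCols_apply_inl, fromCols_apply_inr, toCols₂_apply] <;> fun_prop
  have hcramer : Continuous fun x : Matrix ((α ⊕ κ) ⊕ β) (α ⊕ κ) K ×
      Matrix ((α ⊕ κ) ⊕ β) (κ ⊕ β) K => (cramer x.1 x.2).toRows₁.toRows₂ :=
    continuous_matrix fun i j => by
      simp only [toRows₂_apply, toRows₁_apply]
      exact (continuous_apply_apply _ _).comp (hpivot.matrix_adjugate.matrix_mul
        (continuous_matrix fun i j => by simp only [toCols₁_apply]; fun_prop))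
  exact (isOpen_ne_fun hpivot.matrix_det continuous_const).inter
    (isOpen_ne_fun hcramer.matrix_det continuous_const)

end GenericPair

namespace IsDetSemiInvariant

open GenericPair

variable {K α κ β : Type*} [Field K] [DecidableEq α] [DecidableEq κ] [DecidableEq β]
  [Fintype α] [Fintype κ] [Fintype β]
  {φ : Matrix ((α ⊕ κ) ⊕ β) (α ⊕ κ) K → Matrix ((α ⊕ κ) ⊕ β) (κ ⊕ β) K → K} {p q r : ℕ}

theorem apply_normal_ne_zero [TopologicalSpace K] [IsTopologicalRing K] [T2Space K]
    (hφ : IsDetSemiInvariant φ p q r)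
    (hdense : Dense {x : Matrix ((α ⊕ κ) ⊕ β) (α ⊕ κ) K × Matrix ((α ⊕ κ) ⊕ β) (κ ⊕ β) K |
      φ x.1 x.2 ≠ 0}) :
    φ normalFst normalSnd ≠ 0 := by
  intro h0
  obtain ⟨⟨A, B⟩, ⟨hpivot, hcramer⟩, hAB⟩ :=
    hdense.inter_open_nonempty _ isOpen_setOf_isGeneric
      ⟨(normalFst, normalSnd), isGeneric_normal⟩
  obtain ⟨Z, M, N, hM, hN, hdetM, hdetN⟩ := exists_mul_normal_eq A B
  have h := hφ.mul_target Z normalFst normalSnd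
  rw [hM, hN, hφ.mul_first, hφ.mul_second, h0, mul_zero, hdetM, hdetN] at h
  exact hAB (by simpa [hpivot, hcramer] using h)

theorem det_pow_mul_apply_normal (hφ : IsDetSemiInvariant φ p q r) (d : (α ⊕ κ) ⊕ β → K) :
    (∏ i, d i) ^ r * φ normalFst normalSnd
      = (∏ i, d (Sum.inl i)) ^ p * ((∏ j, d (Sum.elim (Sum.inl ∘ Sum.inr) Sum.inr j)) ^ q
        * φ normalFst normalSnd) := by
  have h := hφ.mul_target (diagonal d) normalFst normalSnd
  rw [normalFst, normalSnd, diagonal_mul_one_submatrix, diagonal_mul_one_submatrix,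
    hφ.mul_first, hφ.mul_second, det_diagonal, det_diagonal, det_diagonal] at h
  exact h.symm

theorem eq_target_of_apply_normal_ne_zero [CharZero K] [Nonempty α] [Nonempty β]
    (hφ : IsDetSemiInvariant φ p q r) (hc : φ normalFst normalSnd ≠ 0) : p = r ∧ q = r := by
  have hα := hφ.det_pow_mul_apply_normal (Sum.elim (Sum.elim (fun _ => 2) 1) 1)
  have hβ := hφ.det_pow_mul_apply_normal (Sum.elim 1 (fun _ => 2))
  simp only [Fintype.prod_sum_type, Sum.elim_inl, Sum.elim_inr, Function.comp_apply,
    Pi.one_apply, Finset.prod_const_one, Finset.prod_const, Finset.card_univ, mul_one, one_mul,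
    one_pow, ← pow_mul] at hα hβ
  exact ⟨(Nat.eq_of_mul_eq_mul_left Fintype.card_pos (eq_of_two_pow_mul_eq hc hα)).symm,
    (Nat.eq_of_mul_eq_mul_left Fintype.card_pos (eq_of_two_pow_mul_eq hc hβ)).symm⟩

end IsDetSemiInvariant

namespace IsDetSemiInvariant

variable {K m n₁ n₂ : Type*} [Field K] [Fintype m] [Fintype n₁] [Fintype n₂]
  [DecidableEq m] [DecidableEq n₁] [DecidableEq n₂] {φ : Matrix m n₁ K → Matrix m n₂ K → K}
  {p q r : ℕ} [TopologicalSpace K] [IsTopologicalRing K] [T2Space K] [CharZero K]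

theorem eq_target_of_lt_card_add (hφ : IsDetSemiInvariant φ p q r)
    (hdense : Dense {x : Matrix m n₁ K × Matrix m n₂ K | φ x.1 x.2 ≠ 0})
    (h₁ : Fintype.card n₁ < Fintype.card m) (h₂ : Fintype.card n₂ < Fintype.card m)
    (h₁₂ : Fintype.card m < Fintype.card n₁ + Fintype.card n₂) : p = r ∧ q = r := by
  -- `a`, `k`, `b` are the dimensions of the normal form: `k` is that of the intersection of
  -- the column spaces of a generic pair.
  set a := Fintype.card m - Fintype.card n₂
  set k := Fintype.card n₁ + Fintype.card n₂ - Fintype.card m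
  set b := Fintype.card m - Fintype.card n₁
  have : Nonempty (Fin a) := ⟨⟨0, by omega⟩⟩
  have : Nonempty (Fin b) := ⟨⟨0, by omega⟩⟩
  let e := Fintype.equivOfCardEq (α := m) (β := (Fin a ⊕ Fin k) ⊕ Fin b) (by simp; omega)
  let e₁ := Fintype.equivOfCardEq (α := n₁) (β := Fin a ⊕ Fin k) (by simp; omega)
  let e₂ := Fintype.equivOfCardEq (α := n₂) (β := Fin k ⊕ Fin b) (by simp; omega)
  have hφ' := hφ.reindex e e₁ e₂
  refine hφ'.eq_target_of_apply_normal_ne_zero (hφ'.apply_normal_ne_zero ?_)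
  refine ((Function.Surjective.denseRange
    (f := Prod.map (Matrix.reindex e e₁) (Matrix.reindex e e₂)) ?_).dense_image
    ((continuous_fst.matrix_reindex e e₁).prodMk (continuous_snd.matrix_reindex e e₂))
    hdense).mono ?_
  · exact Prod.map_surjective.mpr
      ⟨(Matrix.reindex e e₁).surjective, (Matrix.reindex e e₂).surjective⟩
  · rintro _ ⟨x, hx, rfl⟩
    simpa using hx

theorem eq_zero (hφ : IsDetSemiInvariant φ p q r)
    (hdense : Dense {x : Matrix m n₁ K × Matrix m n₂ K | φ x.1 x.2 ≠ 0})
    (h₁ : Fintype.card n₁ ≠ Fintype.card m) (h₂ : Fintype.card n₂ ≠ Fintype.card m)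
    (h₁₂ : Fintype.card n₁ + Fintype.card n₂ ≠ Fintype.card m)
    (hn₁ : 0 < Fintype.card n₁) (hn₂ : 0 < Fintype.card n₂) (hm : 0 < Fintype.card m) :
    p = 0 ∧ q = 0 ∧ r = 0 := by
  obtain ⟨⟨A, B⟩, hAB⟩ := hdense.nonempty
  have hcard := hφ.card_mul_add_card_mul_eq hAB
  rcases h₁.lt_or_gt with hlt₁ | hlt₁ <;> rcases h₂.lt_or_gt with hlt₂ | hlt₂
  · rcases h₁₂.lt_or_gt with hlt₁₂ | hlt₁₂
    · obtain rfl := hφ.target_eq_zero_of_card_add_lt hlt₁₂ hAB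
      simp at hcard
      omega
    · obtain ⟨rfl, rfl⟩ := hφ.eq_target_of_lt_card_add hdense hlt₁ hlt₂ hlt₁₂
      rw [← add_mul, mul_eq_mul_right_iff] at hcard
      omega
  · obtain rfl := hφ.swap.first_eq_zero_of_card_lt hlt₂ hAB
    obtain rfl := hφ.swap.target_eq_zero_of_card_lt hlt₁ hAB
    simp at hcard
    omega
  · obtain rfl := hφ.first_eq_zero_of_card_lt hlt₁ hAB
    obtain rfl := hφ.target_eq_zero_of_card_lt hlt₂ hAB
    simp at hcard
    omega
  · obtain rfl := hφ.first_eq_zero_of_card_lt hlt₁ hAB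
    obtain rfl := hφ.swap.first_eq_zero_of_card_lt hlt₂ hAB
    simp at hcard
    omega

end IsDetSemiInvariant

section TriEval

variable {n₁ n₂ n₃ : ℕ} {f : MvPolynomial (TriVars n₁ n₂ n₃) ℂ}

@[fun_prop]
theorem Continuous.triEval {X : Type*} [TopologicalSpace X] {A : X → Matrix (Fin n₃) (Fin n₁) ℂ}
    {B : X → Matrix (Fin n₃) (Fin n₂) ℂ} (hA : Continuous A) (hB : Continuous B) :
    Continuous fun x => triEval f (A x) (B x) :=
  (continuous_eval f).comp <| continuous_pi fun s => by
    rcases s with ⟨i, j⟩ | ⟨i, j⟩ <;> simp only [Sum.elim_inl, Sum.elim_inr] <;> fun_prop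

theorem dense_setOf_triEval_ne_zero (hf : f ≠ 0) :
    Dense {x : Matrix (Fin n₃) (Fin n₁) ℂ × Matrix (Fin n₃) (Fin n₂) ℂ |
      triEval f x.1 x.2 ≠ 0} :=
  dense_setOf_ne_zero_of_eval_eq (φ := fun x => triEval f x.1 x.2)
    (Ψ := fun v => (Matrix.of fun i j => v (Sum.inl (i, j)),
      Matrix.of fun i j => v (Sum.inr (i, j))))
    (by fun_prop) (fun x => ⟨Sum.elim (fun p => x.1 p.1 p.2) (fun p => x.2 p.1 p.2), rfl⟩) hf
    fun v => congrArg (eval · f) (funext fun s => by rcases s with ⟨i, j⟩ | ⟨i, j⟩ <;> rfl)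

variable {σ₁ σ₂ σ₃ : ℤ}

theorem IsTriSemiInvariant.triEval_mul (hf : IsTriSemiInvariant σ₁ σ₂ σ₃ f)
    {X : Matrix (Fin n₁) (Fin n₁) ℂ} {Y : Matrix (Fin n₂) (Fin n₂) ℂ}
    {Z : Matrix (Fin n₃) (Fin n₃) ℂ} (hX : X.det ≠ 0) (hY : Y.det ≠ 0) (hZ : Z.det ≠ 0)
    (A : Matrix (Fin n₃) (Fin n₁) ℂ) (B : Matrix (Fin n₃) (Fin n₂) ℂ) :
    triEval f (Z * A * X) (Z * B * Y)
      = X.det ^ σ₁ * Y.det ^ σ₂ * Z.det ^ (-σ₃) * triEval f A B := by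
  have hunit {k : ℕ} {W : Matrix (Fin k) (Fin k) ℂ} (hW : W.det ≠ 0) : IsUnit W :=
    (isUnit_iff_isUnit_det W).mpr (isUnit_iff_ne_zero.mpr hW)
  simpa [coe_units_inv, nonsing_inv_nonsing_inv _ (isUnit_iff_ne_zero.mpr hX),
    nonsing_inv_nonsing_inv _ (isUnit_iff_ne_zero.mpr hY), det_nonsing_inv, _root_.inv_zpow']
    using hf (hunit hX).unit⁻¹ (hunit hY).unit⁻¹ (hunit hZ).unit A B

theorem IsTriSemiInvariant.triEval_mul_first (hf : IsTriSemiInvariant σ₁ σ₂ σ₃ f)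
    {X : Matrix (Fin n₁) (Fin n₁) ℂ} (hX : X.det ≠ 0) (A : Matrix (Fin n₃) (Fin n₁) ℂ)
    (B : Matrix (Fin n₃) (Fin n₂) ℂ) : triEval f (A * X) B = X.det ^ σ₁ * triEval f A B := by
  simpa using hf.triEval_mul (Y := 1) (Z := 1) hX (by simp) (by simp) A B

theorem IsTriSemiInvariant.triEval_mul_second (hf : IsTriSemiInvariant σ₁ σ₂ σ₃ f)
    {Y : Matrix (Fin n₂) (Fin n₂) ℂ} (hY : Y.det ≠ 0) (A : Matrix (Fin n₃) (Fin n₁) ℂ)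
    (B : Matrix (Fin n₃) (Fin n₂) ℂ) : triEval f A (B * Y) = Y.det ^ σ₂ * triEval f A B := by
  simpa using hf.triEval_mul (X := 1) (Z := 1) (by simp) hY (by simp) A B

theorem IsTriSemiInvariant.triEval_mul_target (hf : IsTriSemiInvariant σ₁ σ₂ σ₃ f)
    {Z : Matrix (Fin n₃) (Fin n₃) ℂ} (hZ : Z.det ≠ 0) (A : Matrix (Fin n₃) (Fin n₁) ℂ)
    (B : Matrix (Fin n₃) (Fin n₂) ℂ) :
    triEval f (Z * A) (Z * B) = Z.det ^ (-σ₃) * triEval f A B := by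
  simpa using hf.triEval_mul (X := 1) (Y := 1) (by simp) (by simp) hZ A B

theorem IsTriSemiInvariant.weight_signs (hf : IsTriSemiInvariant σ₁ σ₂ σ₃ f) (hn₁ : 0 < n₁)
    (hn₂ : 0 < n₂) (hn₃ : 0 < n₃) {A : Matrix (Fin n₃) (Fin n₁) ℂ}
    {B : Matrix (Fin n₃) (Fin n₂) ℂ} (hAB : triEval f A B ≠ 0) :
    0 ≤ σ₁ ∧ 0 ≤ σ₂ ∧ σ₃ ≤ 0 := by
  have : Nonempty (Fin n₁) := ⟨⟨0, hn₁⟩⟩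
  have : Nonempty (Fin n₂) := ⟨⟨0, hn₂⟩⟩
  have : Nonempty (Fin n₃) := ⟨⟨0, hn₃⟩⟩
  refine ⟨?_, ?_, neg_nonneg.mp ?_⟩
  · exact nonneg_of_continuous_eq_det_zpow_mul (F := fun X : Matrix (Fin n₁) (Fin n₁) ℂ =>
      triEval f (A * X) B) (by fun_prop) (fun X hX => hf.triEval_mul_first hX A B) hAB
  · exact nonneg_of_continuous_eq_det_zpow_mul (F := fun Y : Matrix (Fin n₂) (Fin n₂) ℂ =>
      triEval f A (B * Y)) (by fun_prop) (fun Y hY => hf.triEval_mul_second hY A B) hAB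
  · exact nonneg_of_continuous_eq_det_zpow_mul (F := fun Z : Matrix (Fin n₃) (Fin n₃) ℂ =>
      triEval f (Z * A) (Z * B)) (by fun_prop) (fun Z hZ => hf.triEval_mul_target hZ A B) hAB

theorem IsTriSemiInvariant.isDetSemiInvariant (hf : IsTriSemiInvariant σ₁ σ₂ σ₃ f)
    (h₁ : 0 ≤ σ₁) (h₂ : 0 ≤ σ₂) (h₃ : σ₃ ≤ 0) :
    IsDetSemiInvariant (triEval f) σ₁.toNat σ₂.toNat (-σ₃).toNat where
  mul_first X A B := eq_det_pow_toNat_mul_of_continuous (F := fun X => triEval f (A * X) B)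
    (by fun_prop) (fun X hX => hf.triEval_mul_first hX A B) h₁ X
  mul_second Y A B := eq_det_pow_toNat_mul_of_continuous (F := fun Y => triEval f A (B * Y))
    (by fun_prop) (fun Y hY => hf.triEval_mul_second hY A B) h₂ Y
  mul_target Z A B := eq_det_pow_toNat_mul_of_continuous
    (F := fun Z => triEval f (Z * A) (Z * B)) (by fun_prop)
    (fun Z hZ => hf.triEval_mul_target hZ A B) (by omega) Z

end TriEval

/-- for the quiver `1 → 3 ← 2` with dimension vector `(n₁, n₂, n₃)` where
`n₁ ≠ n₃`, `n₂ ≠ n₃`, and `n₁ + n₂ ≠ n₃`, the only weight admitting a nonzero semi-invariant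
is `(0, 0, 0)`. -/
theorem tri_semiinvariant_iff_generic (n₁ n₂ n₃ : ℕ)
    (hn₁ : 1 ≤ n₁) (hn₂ : 1 ≤ n₂) (hn₃ : 1 ≤ n₃)
    (h₁₃ : n₁ ≠ n₃) (h₂₃ : n₂ ≠ n₃) (h₁₂₃ : n₁ + n₂ ≠ n₃)
    (σ₁ σ₂ σ₃ : ℤ) :
    (∃ f : MvPolynomial (TriVars n₁ n₂ n₃) ℂ, f ≠ 0 ∧ IsTriSemiInvariant σ₁ σ₂ σ₃ f)
      ↔ (σ₁ = 0 ∧ σ₂ = 0 ∧ σ₃ = 0) := by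
  constructor
  · rintro ⟨f, hf0, hf⟩
    have hdense := dense_setOf_triEval_ne_zero hf0
    obtain ⟨⟨A, B⟩, hAB⟩ := hdense.nonempty
    obtain ⟨h₁, h₂, h₃⟩ := hf.weight_signs hn₁ hn₂ hn₃ hAB
    have := (hf.isDetSemiInvariant h₁ h₂ h₃).eq_zero hdense
      (by simpa using h₁₃) (by simpa using h₂₃) (by simpa using h₁₂₃)
      (by simp; omega) (by simp; omega) (by simp; omega)
    omega
  · rintro ⟨rfl, rfl, rfl⟩
    exact ⟨1, one_ne_zero, fun _ _ _ _ _ => by simp [triEval]⟩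
end

section
/- Let n ≥ 1 and consider the square quiver with dimension vector (n₁, n₂, n₃, n₄) = (n, n, n, n). A weight σ = (σ₁, σ₂, σ₃, σ₄) ∈ ℤ⁴ admits a nonzero semi-invariant polynomial if and only if σ₁ ≥ 0, σ₁ + σ₂ ≥ 0, σ₁ + σ₃ ≥ 0, σ₁ + σ₂ + σ₃ ≥ 0, and σ₁ + σ₂ + σ₃ + σ₄ = 0. -/
/-!
Necessity: restrict a semi-invariant `f ≠ 0` to the one-parameter subgroup `gᵢ = t ^ λᵢ • 1`
with `λ` monotone along the arrows. The arrow matrices are rescaled by `t ^ (λ_y - λ_x)`, a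
nonnegative power, so `t ↦ f (g • v)` is a polynomial in `t`; semi-invariance says it equals
`t ^ (-∑ nᵢ λᵢ σᵢ) * f v`, which forces `∑ nᵢ λᵢ σᵢ ≤ 0`. Minus the indicators of the
predecessor-closed sets `{1}, {1,2}, {1,3}, {1,2,3}` and `λ = ±(1,1,1,1)` give the conditions.

Sufficiency: the determinants of the four arrow matrices are semi-invariants of weights
`(1,-1,0,0)`, `(1,0,-1,0)`, `(0,1,0,-1)`, `(0,0,1,-1)`, and every weight satisfying the
conditions is a nonnegative integer combination of these.
-/

/-- Variables: entries of the four matrices attached to the arrows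
`1 → 2`, `1 → 3`, `2 → 4`, `3 → 4` of the square quiver. -/
abbrev SqVars (n₁ n₂ n₃ n₄ : ℕ) :=
  (Fin n₂ × Fin n₁) ⊕ (Fin n₃ × Fin n₁) ⊕ (Fin n₄ × Fin n₂) ⊕ (Fin n₄ × Fin n₃)

/-- Evaluate a polynomial in the matrix entries at a representation `(v₁, v₂, v₃, v₄)`. -/
noncomputable def sqEval {n₁ n₂ n₃ n₄ : ℕ} (f : MvPolynomial (SqVars n₁ n₂ n₃ n₄) ℂ)
    (v₁ : Matrix (Fin n₂) (Fin n₁) ℂ) (v₂ : Matrix (Fin n₃) (Fin n₁) ℂ)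
    (v₃ : Matrix (Fin n₄) (Fin n₂) ℂ) (v₄ : Matrix (Fin n₄) (Fin n₃) ℂ) : ℂ :=
  MvPolynomial.eval
    (Sum.elim (fun p => v₁ p.1 p.2) <| Sum.elim (fun p => v₂ p.1 p.2) <|
      Sum.elim (fun p => v₃ p.1 p.2) (fun p => v₄ p.1 p.2)) f

/-- `f` is a semi-invariant of weight `(σ₁, σ₂, σ₃, σ₄)` for the square quiver. -/
def IsSqSemiInvariant {n₁ n₂ n₃ n₄ : ℕ} (σ₁ σ₂ σ₃ σ₄ : ℤ)
    (f : MvPolynomial (SqVars n₁ n₂ n₃ n₄) ℂ) : Prop :=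
  ∀ (g₁ : (Matrix (Fin n₁) (Fin n₁) ℂ)ˣ) (g₂ : (Matrix (Fin n₂) (Fin n₂) ℂ)ˣ)
    (g₃ : (Matrix (Fin n₃) (Fin n₃) ℂ)ˣ) (g₄ : (Matrix (Fin n₄) (Fin n₄) ℂ)ˣ)
    (v₁ : Matrix (Fin n₂) (Fin n₁) ℂ) (v₂ : Matrix (Fin n₃) (Fin n₁) ℂ)
    (v₃ : Matrix (Fin n₄) (Fin n₂) ℂ) (v₄ : Matrix (Fin n₄) (Fin n₃) ℂ),
    sqEval f
        ((g₂ : Matrix (Fin n₂) (Fin n₂) ℂ) * v₁ * (g₁⁻¹ : Matrix (Fin n₁) (Fin n₁) ℂ))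
        ((g₃ : Matrix (Fin n₃) (Fin n₃) ℂ) * v₂ * (g₁⁻¹ : Matrix (Fin n₁) (Fin n₁) ℂ))
        ((g₄ : Matrix (Fin n₄) (Fin n₄) ℂ) * v₃ * (g₂⁻¹ : Matrix (Fin n₂) (Fin n₂) ℂ))
        ((g₄ : Matrix (Fin n₄) (Fin n₄) ℂ) * v₄ * (g₃⁻¹ : Matrix (Fin n₃) (Fin n₃) ℂ))
      = (g₁ : Matrix (Fin n₁) (Fin n₁) ℂ).det ^ (-σ₁)
        * (g₂ : Matrix (Fin n₂) (Fin n₂) ℂ).det ^ (-σ₂)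
        * (g₃ : Matrix (Fin n₃) (Fin n₃) ℂ).det ^ (-σ₃)
        * (g₄ : Matrix (Fin n₄) (Fin n₄) ℂ).det ^ (-σ₄)
        * sqEval f v₁ v₂ v₃ v₄

open MvPolynomial Polynomial

theorem Polynomial.zpow_exponent_nonneg_of_eval_eq {K : Type*} [Field K] [Infinite K]
    (P : K[X]) {k : ℤ} {c : K} (hc : c ≠ 0) (h : ∀ t ≠ 0, P.eval t = t ^ k * c) : 0 ≤ k := by
  by_contra! hk
  obtain ⟨m, hm⟩ : ∃ m : ℕ, k = -(m + 1 : ℕ) := ⟨(-k - 1).toNat, by omega⟩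
  have hP : X ^ (m + 1) * P = C c := by
    refine eq_of_infinite_eval_eq _ _ ((Set.finite_singleton 0).infinite_compl.mono ?_)
    intro t (ht : t ≠ 0)
    simp only [Set.mem_ofPred_eq, eval_mul, eval_pow, eval_X, eval_C, h t ht, hm, zpow_neg,
      zpow_natCast, ← mul_assoc, mul_inv_cancel₀ (pow_ne_zero _ ht), one_mul]
  simpa [eq_comm, hc] using congrArg (eval 0) hP

theorem MvPolynomial.eval_aeval_polynomial {K V : Type*} [CommRing K] (q : V → K[X])
    (f : MvPolynomial V K) (t : K) :
    (aeval q f).eval t = eval (fun v => (q v).eval t) f := by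
  rw [← Polynomial.coe_aeval_eq_eval, ← AlgHom.comp_apply, comp_aeval, ← coe_aeval_eq_eval]
  rfl

theorem MvPolynomial.exists_eval_ne_zero {K V : Type*} [Field K] [Infinite K]
    {f : MvPolynomial V K} (hf : f ≠ 0) : ∃ x, eval x f ≠ 0 := by
  by_contra! h
  exact hf (funext fun x => by simp [h x])

theorem MvPolynomial.eval_det_of_X {R V n : Type*} [CommRing R] [Fintype n] [DecidableEq n]
    (x : V → R) (p : n → n → V) :
    eval x (Matrix.of fun i j => X (p i j)).det = (Matrix.of fun i j => x (p i j)).det := by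
  rw [RingHom.map_det]
  congr 1
  ext i j
  simp

theorem Units.val_zpow_mul_zpow_inv {M : Type*} [Monoid M] (u : Mˣ) {a b : ℤ} (h : a ≤ b) :
    ((u ^ b * (u ^ a)⁻¹ : Mˣ) : M) = (u : M) ^ (b - a).toNat := by
  rw [← zpow_neg, ← zpow_add, ← sub_eq_add_neg, ← Int.toNat_of_nonneg (sub_nonneg.2 h),
    zpow_natCast, Units.val_pow_eq_pow_val, Int.toNat_natCast]

namespace Matrix.GeneralLinearGroup

theorem scalar_mul_mul_scalar_inv {R m k : Type*} [CommRing R] [Fintype m] [DecidableEq m]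
    [Fintype k] [DecidableEq k] (a b : Rˣ) (v : Matrix m k R) :
    (scalar m a : Matrix m m R) * v * (scalar k b : Matrix k k R)⁻¹ = ((a * b⁻¹ : Rˣ) : R) • v := by
  rw [← Matrix.coe_units_inv, ← map_inv, coe_scalar, coe_scalar]
  ext i j
  simp [Matrix.scalar_apply, Matrix.mul_diagonal, Matrix.diagonal_mul]
  ring

theorem det_scalar_zpow_zpow {K m : Type*} [Field K] [Fintype m] [DecidableEq m] (u : Kˣ)
    (l σ : ℤ) :
    (scalar m (u ^ l) : Matrix m m K).det ^ σ = (u : K) ^ (Fintype.card m * l * σ) := by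
  rw [← val_det_apply, det_scalar, Units.val_pow_eq_pow_val, Units.val_zpow_eq_zpow_val,
    ← _root_.zpow_natCast, ← _root_.zpow_mul, ← _root_.zpow_mul]
  ring_nf

end Matrix.GeneralLinearGroup

section SemiInvariant

variable {n₁ n₂ n₃ n₄ : ℕ}

theorem sqEval_one (v₁ : Matrix (Fin n₂) (Fin n₁) ℂ) (v₂ : Matrix (Fin n₃) (Fin n₁) ℂ)
    (v₃ : Matrix (Fin n₄) (Fin n₂) ℂ) (v₄ : Matrix (Fin n₄) (Fin n₃) ℂ) :
    sqEval 1 v₁ v₂ v₃ v₄ = 1 :=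
  map_one _

theorem sqEval_mul (f g : MvPolynomial (SqVars n₁ n₂ n₃ n₄) ℂ)
    (v₁ : Matrix (Fin n₂) (Fin n₁) ℂ) (v₂ : Matrix (Fin n₃) (Fin n₁) ℂ)
    (v₃ : Matrix (Fin n₄) (Fin n₂) ℂ) (v₄ : Matrix (Fin n₄) (Fin n₃) ℂ) :
    sqEval (f * g) v₁ v₂ v₃ v₄ = sqEval f v₁ v₂ v₃ v₄ * sqEval g v₁ v₂ v₃ v₄ :=
  map_mul _ _ _

theorem sqEval_pow (f : MvPolynomial (SqVars n₁ n₂ n₃ n₄) ℂ) (k : ℕ)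
    (v₁ : Matrix (Fin n₂) (Fin n₁) ℂ) (v₂ : Matrix (Fin n₃) (Fin n₁) ℂ)
    (v₃ : Matrix (Fin n₄) (Fin n₂) ℂ) (v₄ : Matrix (Fin n₄) (Fin n₃) ℂ) :
    sqEval (f ^ k) v₁ v₂ v₃ v₄ = sqEval f v₁ v₂ v₃ v₄ ^ k :=
  map_pow _ _ _

theorem isSqSemiInvariant_one :
    IsSqSemiInvariant (n₁ := n₁) (n₂ := n₂) (n₃ := n₃) (n₄ := n₄) 0 0 0 0 1 := by
  intro g₁ g₂ g₃ g₄ v₁ v₂ v₃ v₄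
  simp [sqEval_one]

open Matrix.GeneralLinearGroup in
theorem IsSqSemiInvariant.mul {σ₁ σ₂ σ₃ σ₄ τ₁ τ₂ τ₃ τ₄ : ℤ}
    {f g : MvPolynomial (SqVars n₁ n₂ n₃ n₄) ℂ}
    (hf : IsSqSemiInvariant σ₁ σ₂ σ₃ σ₄ f) (hg : IsSqSemiInvariant τ₁ τ₂ τ₃ τ₄ g) :
    IsSqSemiInvariant (σ₁ + τ₁) (σ₂ + τ₂) (σ₃ + τ₃) (σ₄ + τ₄) (f * g) := by
  intro g₁ g₂ g₃ g₄ v₁ v₂ v₃ v₄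
  simp only [sqEval_mul, hf g₁ g₂ g₃ g₄, hg g₁ g₂ g₃ g₄, neg_add,
    zpow_add₀ (det_ne_zero g₁), zpow_add₀ (det_ne_zero g₂), zpow_add₀ (det_ne_zero g₃),
    zpow_add₀ (det_ne_zero g₄)]
  ring

theorem IsSqSemiInvariant.pow {σ₁ σ₂ σ₃ σ₄ : ℤ} {f : MvPolynomial (SqVars n₁ n₂ n₃ n₄) ℂ}
    (hf : IsSqSemiInvariant σ₁ σ₂ σ₃ σ₄ f) (k : ℕ) :
    IsSqSemiInvariant (k * σ₁) (k * σ₂) (k * σ₃) (k * σ₄) (f ^ k) := by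
  induction k with
  | zero => simpa using isSqSemiInvariant_one
  | succ k ih => simpa [pow_succ, add_mul] using ih.mul hf

end SemiInvariant

section ArrowDet

variable (n : ℕ) {n₁ n₂ n₃ n₄ : ℕ}

noncomputable def arrowDet₁ : MvPolynomial (SqVars n n n₃ n₄) ℂ :=
  (Matrix.of fun i j => X (Sum.inl (i, j))).det

noncomputable def arrowDet₂ : MvPolynomial (SqVars n n₂ n n₄) ℂ :=
  (Matrix.of fun i j => X (Sum.inr (Sum.inl (i, j)))).det

noncomputable def arrowDet₃ : MvPolynomial (SqVars n₁ n n₃ n) ℂ :=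
  (Matrix.of fun i j => X (Sum.inr (Sum.inr (Sum.inl (i, j))))).det

noncomputable def arrowDet₄ : MvPolynomial (SqVars n₁ n₂ n n) ℂ :=
  (Matrix.of fun i j => X (Sum.inr (Sum.inr (Sum.inr (i, j))))).det

variable {n}

theorem sqEval_arrowDet₁ (v₁ : Matrix (Fin n) (Fin n) ℂ) (v₂ : Matrix (Fin n₃) (Fin n) ℂ)
    (v₃ : Matrix (Fin n₄) (Fin n) ℂ) (v₄ : Matrix (Fin n₄) (Fin n₃) ℂ) :
    sqEval (arrowDet₁ n) v₁ v₂ v₃ v₄ = v₁.det :=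
  eval_det_of_X _ _

theorem sqEval_arrowDet₂ (v₁ : Matrix (Fin n₂) (Fin n) ℂ) (v₂ : Matrix (Fin n) (Fin n) ℂ)
    (v₃ : Matrix (Fin n₄) (Fin n₂) ℂ) (v₄ : Matrix (Fin n₄) (Fin n) ℂ) :
    sqEval (arrowDet₂ n) v₁ v₂ v₃ v₄ = v₂.det :=
  eval_det_of_X _ _

theorem sqEval_arrowDet₃ (v₁ : Matrix (Fin n) (Fin n₁) ℂ) (v₂ : Matrix (Fin n₃) (Fin n₁) ℂ)
    (v₃ : Matrix (Fin n) (Fin n) ℂ) (v₄ : Matrix (Fin n) (Fin n₃) ℂ) :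
    sqEval (arrowDet₃ n) v₁ v₂ v₃ v₄ = v₃.det :=
  eval_det_of_X _ _

theorem sqEval_arrowDet₄ (v₁ : Matrix (Fin n₂) (Fin n₁) ℂ) (v₂ : Matrix (Fin n) (Fin n₁) ℂ)
    (v₃ : Matrix (Fin n) (Fin n₂) ℂ) (v₄ : Matrix (Fin n) (Fin n) ℂ) :
    sqEval (arrowDet₄ n) v₁ v₂ v₃ v₄ = v₄.det :=
  eval_det_of_X _ _

theorem isSqSemiInvariant_arrowDet₁ :
    IsSqSemiInvariant 1 (-1) 0 0 (arrowDet₁ n (n₃ := n₃) (n₄ := n₄)) := by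
  intro g₁ g₂ g₃ g₄ v₁ v₂ v₃ v₄
  simp [sqEval_arrowDet₁, Matrix.det_mul]
  ring

theorem isSqSemiInvariant_arrowDet₂ :
    IsSqSemiInvariant 1 0 (-1) 0 (arrowDet₂ n (n₂ := n₂) (n₄ := n₄)) := by
  intro g₁ g₂ g₃ g₄ v₁ v₂ v₃ v₄
  simp [sqEval_arrowDet₂, Matrix.det_mul]
  ring

theorem isSqSemiInvariant_arrowDet₃ :
    IsSqSemiInvariant 0 1 0 (-1) (arrowDet₃ n (n₁ := n₁) (n₃ := n₃)) := by
  intro g₁ g₂ g₃ g₄ v₁ v₂ v₃ v₄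
  simp [sqEval_arrowDet₃, Matrix.det_mul]
  ring

theorem isSqSemiInvariant_arrowDet₄ :
    IsSqSemiInvariant 0 0 1 (-1) (arrowDet₄ n (n₁ := n₁) (n₂ := n₂)) := by
  intro g₁ g₂ g₃ g₄ v₁ v₂ v₃ v₄
  simp [sqEval_arrowDet₄, Matrix.det_mul]
  ring

end ArrowDet

noncomputable def sqDetMonomial (n a b c d : ℕ) : MvPolynomial (SqVars n n n n) ℂ :=
  arrowDet₁ n ^ a * arrowDet₂ n ^ b * arrowDet₃ n ^ c * arrowDet₄ n ^ d

theorem sqEval_sqDetMonomial (n a b c d : ℕ) (v₁ v₂ v₃ v₄ : Matrix (Fin n) (Fin n) ℂ) :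
    sqEval (sqDetMonomial n a b c d) v₁ v₂ v₃ v₄
      = v₁.det ^ a * v₂.det ^ b * v₃.det ^ c * v₄.det ^ d := by
  simp only [sqDetMonomial, sqEval_mul, sqEval_pow, sqEval_arrowDet₁, sqEval_arrowDet₂,
    sqEval_arrowDet₃, sqEval_arrowDet₄]

theorem sqDetMonomial_ne_zero (n a b c d : ℕ) : sqDetMonomial n a b c d ≠ 0 := by
  intro h
  have h₁ := sqEval_sqDetMonomial n a b c d 1 1 1 1
  simp [h, sqEval] at h₁

theorem isSqSemiInvariant_sqDetMonomial (n a b c d : ℕ) :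
    IsSqSemiInvariant (a + b) (c - a) (d - b) (-c - d) (sqDetMonomial n a b c d) := by
  have h : IsSqSemiInvariant _ _ _ _ (sqDetMonomial n a b c d) :=
    (((isSqSemiInvariant_arrowDet₁.pow a).mul (isSqSemiInvariant_arrowDet₂.pow b)).mul
      (isSqSemiInvariant_arrowDet₃.pow c)).mul (isSqSemiInvariant_arrowDet₄.pow d)
  convert h using 1 <;> ring

section Necessity

variable {n₁ n₂ n₃ n₄ : ℕ}

theorem exists_sqEval_ne_zero {f : MvPolynomial (SqVars n₁ n₂ n₃ n₄) ℂ} (hf : f ≠ 0) :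
    ∃ v₁ v₂ v₃ v₄, sqEval f v₁ v₂ v₃ v₄ ≠ 0 := by
  obtain ⟨x, hx⟩ := exists_eval_ne_zero hf
  refine ⟨.of fun i j => x (.inl (i, j)), .of fun i j => x (.inr (.inl (i, j))),
    .of fun i j => x (.inr (.inr (.inl (i, j)))), .of fun i j => x (.inr (.inr (.inr (i, j)))), ?_⟩
  convert hx using 1
  exact congrArg (eval · f) (funext fun u => by rcases u with _ | _ | _ | _ <;> rfl)

theorem exists_polynomial_eval_eq_sqEval_smul (f : MvPolynomial (SqVars n₁ n₂ n₃ n₄) ℂ)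
    (a b c d : ℕ) (v₁ : Matrix (Fin n₂) (Fin n₁) ℂ) (v₂ : Matrix (Fin n₃) (Fin n₁) ℂ)
    (v₃ : Matrix (Fin n₄) (Fin n₂) ℂ) (v₄ : Matrix (Fin n₄) (Fin n₃) ℂ) :
    ∃ P : ℂ[X], ∀ t, P.eval t = sqEval f (t ^ a • v₁) (t ^ b • v₂) (t ^ c • v₃) (t ^ d • v₄) := by
  refine ⟨aeval (Sum.elim (fun p => .C (v₁ p.1 p.2) * .X ^ a) <|
    Sum.elim (fun p => .C (v₂ p.1 p.2) * .X ^ b) <|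
    Sum.elim (fun p => .C (v₃ p.1 p.2) * .X ^ c) (fun p => .C (v₄ p.1 p.2) * .X ^ d)) f,
    fun t => ?_⟩
  rw [eval_aeval_polynomial, sqEval]
  refine congrArg (eval · f) (funext fun u => ?_)
  rcases u with _ | _ | _ | _ <;>
    simp only [Sum.elim_inl, Sum.elim_inr, Polynomial.eval_mul, Polynomial.eval_C,
      Polynomial.eval_pow, Polynomial.eval_X, Matrix.smul_apply, smul_eq_mul, mul_comm]

open Matrix.GeneralLinearGroup in
theorem IsSqSemiInvariant.pairing_nonpos_of_monotone {σ₁ σ₂ σ₃ σ₄ : ℤ}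
    {f : MvPolynomial (SqVars n₁ n₂ n₃ n₄) ℂ} (hf : IsSqSemiInvariant σ₁ σ₂ σ₃ σ₄ f)
    (hf₀ : f ≠ 0) {l₁ l₂ l₃ l₄ : ℤ} (h₁₂ : l₁ ≤ l₂) (h₁₃ : l₁ ≤ l₃) (h₂₄ : l₂ ≤ l₄)
    (h₃₄ : l₃ ≤ l₄) :
    n₁ * l₁ * σ₁ + n₂ * l₂ * σ₂ + n₃ * l₃ * σ₃ + n₄ * l₄ * σ₄ ≤ 0 := by
  obtain ⟨v₁, v₂, v₃, v₄, hv⟩ := exists_sqEval_ne_zero hf₀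
  obtain ⟨P, hP⟩ := exists_polynomial_eval_eq_sqEval_smul f (l₂ - l₁).toNat (l₃ - l₁).toNat
    (l₄ - l₂).toNat (l₄ - l₃).toNat v₁ v₂ v₃ v₄
  suffices 0 ≤ -(n₁ * l₁ * σ₁ + n₂ * l₂ * σ₂ + n₃ * l₃ * σ₃ + n₄ * l₄ * σ₄) by linarith
  refine P.zpow_exponent_nonneg_of_eval_eq hv fun t ht => ?_
  set u := Units.mk0 t ht
  have h := hf (scalar _ (u ^ l₁)) (scalar _ (u ^ l₂)) (scalar _ (u ^ l₃)) (scalar _ (u ^ l₄))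
    v₁ v₂ v₃ v₄
  simp only [scalar_mul_mul_scalar_inv, u.val_zpow_mul_zpow_inv h₁₂,
    u.val_zpow_mul_zpow_inv h₁₃, u.val_zpow_mul_zpow_inv h₂₄, u.val_zpow_mul_zpow_inv h₃₄,
    det_scalar_zpow_zpow, Fintype.card_fin, Units.val_mk0, u] at h
  rw [hP, h, ← zpow_add₀ ht, ← zpow_add₀ ht, ← zpow_add₀ ht]
  ring_nf

end Necessity

/-- for the square quiver with dimension vector `(n, n, n, n)`, a weight
`(σ₁, σ₂, σ₃, σ₄)` admits a nonzero semi-invariant iff `σ₁ ≥ 0`, `σ₁ + σ₂ ≥ 0`,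
`σ₁ + σ₃ ≥ 0`, `σ₁ + σ₂ + σ₃ ≥ 0`, and `σ₁ + σ₂ + σ₃ + σ₄ = 0`. -/
theorem sq_semiinvariant_iff_nnnn (n : ℕ) (hn : 1 ≤ n) (σ₁ σ₂ σ₃ σ₄ : ℤ) :
    (∃ f : MvPolynomial (SqVars n n n n) ℂ, f ≠ 0 ∧ IsSqSemiInvariant σ₁ σ₂ σ₃ σ₄ f)
      ↔ (0 ≤ σ₁ ∧ 0 ≤ σ₁ + σ₂ ∧ 0 ≤ σ₁ + σ₃ ∧ 0 ≤ σ₁ + σ₂ + σ₃ ∧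
          σ₁ + σ₂ + σ₃ + σ₄ = 0) := by
  constructor
  · rintro ⟨f, hf₀, hf⟩
    have key (l₁ l₂ l₃ l₄ : ℤ) (h : l₁ ≤ l₂ ∧ l₁ ≤ l₃ ∧ l₂ ≤ l₄ ∧ l₃ ≤ l₄) :
        l₁ * σ₁ + l₂ * σ₂ + l₃ * σ₃ + l₄ * σ₄ ≤ 0 := by
      have := hf.pairing_nonpos_of_monotone hf₀ h.1 h.2.1 h.2.2.1 h.2.2.2
      exact nonpos_of_mul_nonpos_right (a := (n : ℤ)) (by linarith) (by omega)
    have := key (-1) 0 0 0 (by norm_num)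
    have := key (-1) (-1) 0 0 (by norm_num)
    have := key (-1) 0 (-1) 0 (by norm_num)
    have := key (-1) (-1) (-1) 0 (by norm_num)
    have := key 1 1 1 1 (by norm_num)
    have := key (-1) (-1) (-1) (-1) (by norm_num)
    omega
  · rintro ⟨h₁, h₂, h₃, h₄, h₅⟩
    -- `a = max 0 (-σ₂)` is the choice that makes the forced values of `b`, `c`, `d` nonnegative.
    obtain ⟨a, b, c, d, rfl, rfl, rfl, rfl⟩ :
        ∃ a b c d : ℕ, σ₁ = a + b ∧ σ₂ = c - a ∧ σ₃ = d - b ∧ σ₄ = -c - d :=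
      ⟨(-σ₂).toNat, (min σ₁ (σ₁ + σ₂)).toNat, σ₂.toNat, (min (σ₁ + σ₃) (σ₁ + σ₂ + σ₃)).toNat,
        by omega, by omega, by omega, by omega⟩
    exact ⟨_, sqDetMonomial_ne_zero n a b c d, isSqSemiInvariant_sqDetMonomial n a b c d⟩
end
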